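/- arXiv:2412.16684 — 4 statements merged into one kernel-verified Lean document; each statement's English description precedes it below -/
import Mathlib

section
/- Let W, W' be symmetric N×N real matrices with zero diagonal, N = m + n ≥ 4, and let π be a uniformly random permutation. With U_x = Σ_{π(i)≤m, π(j)≤m} W_{ij} and U'_x defined likewise from W', one has Cov(U_x, U'_x) = C(m−1)[(n−1)·W̃_2 + 2(m−2)·W̃_3], where C = 2mn/(N(N−1)(N−2)(N−3)), W̃_2 = Σ_{i,j} W_{ij}W'_{ij} − W_1 W'_1/(N(N−1)), W̃_3 = Σ_{i,j,r} W_{ij}W'_{ir} − W_1 W'_1/N, and W_1 = Σ_{i,j} W_{ij}, W'_1 = Σ_{i,j} W'_{ij}. -/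
/-!
Write `Ux W m π = ∑ i j, W i j * χ π {i, j}`, where `χ π s` indicates that `π` sends `s` into the
first `m` labels. Since `χ π s * χ π t = χ π (s ∪ t)` and a uniform permutation sends a fixed
`t`-set into the first `m` labels with probability `q t = m^(t) / N^(t)` (falling factorials),
`E[Ux W * Ux W'] = ∑ W i j * W' k l * q #({i, j} ∪ {k, l})`. For symmetric matrices with zero
diagonal this splits according to whether `{k, l}` meets `{i, j}` in zero, one or two points,
producing the three sums of the statement.

The counting formula is proved by induction on the set: for `a ∉ s`, the number of permutations
sending `insert a s` into `T` does not depend on `a` (compose with `swap a b`), and summing it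
over all `a ∉ s` counts the permutations sending `s` into `T` with multiplicity `#T - #s`.
-/

open Finset

/-- Expectation under the uniform distribution on permutations of `Fin N`. -/
noncomputable def pE {N : ℕ} (f : Equiv.Perm (Fin N) → ℝ) : ℝ :=
  (∑ π : Equiv.Perm (Fin N), f π) / (Fintype.card (Equiv.Perm (Fin N)) : ℝ)

/-- Covariance under the uniform distribution on permutations of `Fin N`. -/
noncomputable def pCov {N : ℕ} (f g : Equiv.Perm (Fin N) → ℝ) : ℝ :=
  pE (fun π => (f π - pE f) * (g π - pE g))

/-- Within-first-group sum: sums `W i j` over pairs both assigned to the first `m` labels. -/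
noncomputable def Ux {N : ℕ} (W : Matrix (Fin N) (Fin N) ℝ) (m : ℕ)
    (π : Equiv.Perm (Fin N)) : ℝ :=
  ∑ i, ∑ j, if (π i : ℕ) < m ∧ (π j : ℕ) < m then W i j else 0

/-- Within-second-group sum: sums `W i j` over pairs both assigned to labels `> m`. -/
noncomputable def Uy {N : ℕ} (W : Matrix (Fin N) (Fin N) ℝ) (m : ℕ)
    (π : Equiv.Perm (Fin N)) : ℝ :=
  ∑ i, ∑ j, if m ≤ (π i : ℕ) ∧ m ≤ (π j : ℕ) then W i j else 0

open Equiv Nat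

section Counting

variable {α : Type*} [Fintype α] [DecidableEq α] (T : Finset α)

lemma card_perm_mapsTo_insert_eq_of_notMem {s : Finset α} {a b : α} (ha : a ∉ s) (hb : b ∉ s) :
    #{π : Perm α | ∀ x ∈ insert a s, π x ∈ T} = #{π : Perm α | ∀ x ∈ insert b s, π x ∈ T} := by
  refine card_equiv (Equiv.mulRight (swap a b)) fun π => ?_
  have hs : ∀ x ∈ s, swap a b x = x := fun x hx =>
    swap_apply_of_ne_of_ne (ne_of_mem_of_not_mem hx ha) (ne_of_mem_of_not_mem hx hb)
  simp only [mem_filter, mem_univ, true_and, forall_mem_insert, Equiv.coe_mulRight,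
    Perm.mul_apply, swap_apply_right]
  exact and_congr_right' (forall₂_congr fun x hx => by rw [hs x hx])

lemma card_filter_compl_apply_mem {s : Finset α} {π : Perm α} (hπ : ∀ x ∈ s, π x ∈ T) :
    #{j ∈ sᶜ | π j ∈ T} = #T - #s := by
  have hsub : s ⊆ T.map π.symm.toEmbedding := fun x hx => by simpa using hπ x hx
  have heq : {j ∈ sᶜ | π j ∈ T} = T.map π.symm.toEmbedding \ s := by
    ext j; simp [and_comm]
  rw [heq, card_sdiff_of_subset hsub, card_map]

lemma sum_card_perm_mapsTo_insert (s : Finset α) :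
    ∑ j ∈ sᶜ, #{π : Perm α | ∀ x ∈ insert j s, π x ∈ T}
      = (#T - #s) * #{π : Perm α | ∀ x ∈ s, π x ∈ T} := by
  simp_rw [forall_mem_insert, and_comm (a := _ ∈ T), ← filter_filter]
  calc _ = ∑ π ∈ {π : Perm α | ∀ x ∈ s, π x ∈ T}, #{j ∈ sᶜ | π j ∈ T} :=
        sum_card_bipartiteAbove_eq_sum_card_bipartiteBelow _
    _ = _ := by
      rw [sum_congr rfl fun π hπ => card_filter_compl_apply_mem T (mem_filter.mp hπ).2,
        sum_const, smul_eq_mul, mul_comm]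

lemma card_perm_mapsTo (s : Finset α) :
    #{π : Perm α | ∀ x ∈ s, π x ∈ T} = (#T).descFactorial #s * (Fintype.card α - #s)! := by
  induction s using Finset.induction_on with
  | empty => simp [Fintype.card_perm]
  | @insert a s ha ih =>
    have hlt : #s < Fintype.card α := card_lt_univ_of_notMem ha
    have key : (Fintype.card α - #s) * #{π : Perm α | ∀ x ∈ insert a s, π x ∈ T}
        = (#T - #s) * #{π : Perm α | ∀ x ∈ s, π x ∈ T} := by
      rw [← sum_card_perm_mapsTo_insert, ← card_compl, ← smul_eq_mul, ← sum_const]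
      exact sum_congr rfl fun j hj =>
        card_perm_mapsTo_insert_eq_of_notMem T ha (mem_compl.mp hj)
    obtain ⟨k, hk⟩ := Nat.exists_eq_add_of_lt hlt
    rw [ih, hk, show #s + k + 1 - #s = k + 1 by omega, factorial_succ] at key
    rw [card_insert_of_notMem ha, descFactorial_succ, hk, show #s + k + 1 - (#s + 1) = k by omega]
    exact Nat.eq_of_mul_eq_mul_left (by omega : 0 < k + 1) (key.trans (by ring))

end Counting

section FourIndexSums

variable {ι : Type*} [DecidableEq ι]

lemma apply_card_pair_union_pair (f : ℕ → ℝ) {i j k l : ι} (hij : i ≠ j) (hkl : k ≠ l) :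
    f #({i, j} ∪ {k, l}) =
      f 4 + (f 3 - f 4) * ((if k = i then 1 else 0) + (if k = j then 1 else 0)
          + (if l = i then 1 else 0) + (if l = j then 1 else 0))
        + (f 2 - 2 * f 3 + f 4) * ((if k = i then 1 else 0) * (if l = j then 1 else 0)
          + (if k = j then 1 else 0) * (if l = i then 1 else 0)) := by
  by_cases hki : k = i <;> by_cases hkj : k = j <;> by_cases hli : l = i <;>
    by_cases hlj : l = j <;> subst_vars <;> simp_all [card_insert_of_notMem, Ne.symm] <;> ring

variable [Fintype ι] {W W' : Matrix ι ι ℝ}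

lemma sum_mul_apply_card_pair_union_pair_of_ne (hW' : W'.IsSymm) (hd' : ∀ i, W' i i = 0)
    (f : ℕ → ℝ) {i j : ι} (hij : i ≠ j) :
    ∑ k, ∑ l, W' k l * f #({i, j} ∪ {k, l}) =
      f 4 * ∑ k, ∑ l, W' k l + 2 * (f 3 - f 4) * (∑ l, W' i l + ∑ l, W' j l)
        + 2 * (f 2 - 2 * f 3 + f 4) * W' i j := by
  have hterm : ∀ k l, W' k l * f #({i, j} ∪ {k, l}) = W' k l * (f 4 + (f 3 - f 4) *
      ((if k = i then 1 else 0) + (if k = j then 1 else 0) + (if l = i then 1 else 0)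
        + (if l = j then 1 else 0)) + (f 2 - 2 * f 3 + f 4) *
      ((if k = i then 1 else 0) * (if l = j then 1 else 0)
        + (if k = j then 1 else 0) * (if l = i then 1 else 0))) := by
    intro k l
    rcases eq_or_ne k l with rfl | hkl
    · simp [hd']
    · rw [apply_card_pair_union_pair f hij hkl]
  have hcol : ∀ x, ∑ k, W' k x = ∑ l, W' x l := fun x => sum_congr rfl fun k _ => hW'.apply x k
  simp only [hterm, mul_add, mul_ite, mul_one, mul_zero, sum_add_distrib, sum_ite_irrel,
    sum_const_zero, sum_ite_eq', mem_univ, if_true, ← sum_mul, hcol, hW'.apply i j]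
  ring

lemma sum_mul_mul_apply_card_pair_union_pair (hW : W.IsSymm) (hd : ∀ i, W i i = 0)
    (hW' : W'.IsSymm) (hd' : ∀ i, W' i i = 0) (f : ℕ → ℝ) :
    ∑ i, ∑ j, ∑ k, ∑ l, W i j * W' k l * f #({i, j} ∪ {k, l}) =
      f 4 * ((∑ i, ∑ j, W i j) * ∑ k, ∑ l, W' k l)
        + 4 * (f 3 - f 4) * ∑ i, ∑ j, ∑ r, W i j * W' i r
        + 2 * (f 2 - 2 * f 3 + f 4) * ∑ i, ∑ j, W i j * W' i j := by
  have hrow : ∀ i j, ∑ k, ∑ l, W i j * W' k l * f #({i, j} ∪ {k, l}) =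
      f 4 * (W i j * ∑ k, ∑ l, W' k l) + 2 * (f 3 - f 4) * (W i j * ∑ l, W' i l)
        + 2 * (f 3 - f 4) * (W i j * ∑ l, W' j l)
        + 2 * (f 2 - 2 * f 3 + f 4) * (W i j * W' i j) := by
    intro i j
    rcases eq_or_ne i j with rfl | hij
    · simp [hd]
    · simp only [mul_assoc, ← mul_sum]
      rw [sum_mul_apply_card_pair_union_pair_of_ne hW' hd' f hij]
      ring
  have hcol : ∑ i, ∑ j, W i j * ∑ l, W' j l = ∑ i, ∑ j, W i j * ∑ l, W' i l := by
    rw [sum_comm]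
    exact sum_congr rfl fun j _ => sum_congr rfl fun i _ => by rw [hW.apply j i]
  simp only [hrow, sum_add_distrib, ← mul_sum, hcol, ← sum_mul]
  ring

end FourIndexSums

section Permutations

variable {N : ℕ}

lemma pE_sum {β : Type*} (s : Finset β) (F : β → Perm (Fin N) → ℝ) :
    pE (fun π => ∑ x ∈ s, F x π) = ∑ x ∈ s, pE (F x) := by
  simp only [pE, sum_comm (s := univ), sum_div]

lemma pE_const_mul (c : ℝ) (f : Perm (Fin N) → ℝ) : pE (fun π => c * f π) = c * pE f := by
  simp only [pE, ← mul_sum, mul_div_assoc]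

lemma pCov_eq_pE_mul_sub_mul (f g : Perm (Fin N) → ℝ) :
    pCov f g = pE (fun π => f π * g π) - pE f * pE g := by
  have hcard : (Fintype.card (Perm (Fin N)) : ℝ) ≠ 0 := by positivity
  simp only [pCov, pE, sub_mul, mul_sub, sum_sub_distrib, ← mul_sum, ← sum_mul, sum_const,
    nsmul_eq_mul]
  rw [Finset.card_univ]
  field_simp
  ring

noncomputable def firstGroupIndicator (m : ℕ) (π : Perm (Fin N)) (s : Finset (Fin N)) : ℝ :=
  if ∀ x ∈ s, (π x : ℕ) < m then 1 else 0

variable (m : ℕ)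

lemma firstGroupIndicator_mul (π : Perm (Fin N)) (s t : Finset (Fin N)) :
    firstGroupIndicator m π s * firstGroupIndicator m π t = firstGroupIndicator m π (s ∪ t) := by
  simp only [firstGroupIndicator, forall_mem_union, ite_zero_mul_ite_zero, one_mul]

lemma Ux_eq_sum_firstGroupIndicator (W : Matrix (Fin N) (Fin N) ℝ) :
    Ux W m = fun π => ∑ i, ∑ j, W i j * firstGroupIndicator m π {i, j} := by
  ext π
  simp only [Ux, firstGroupIndicator, forall_mem_insert, mem_singleton, forall_eq, mul_ite,
    mul_one, mul_zero]

lemma pE_firstGroupIndicator (hmN : m ≤ N) (s : Finset (Fin N)) :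
    pE (fun π => firstGroupIndicator m π s) = (m.descFactorial #s : ℝ) / N.descFactorial #s := by
  have hsN : #s ≤ N := card_le_univ s |>.trans_eq (Fintype.card_fin N)
  have hcount := card_perm_mapsTo {v : Fin N | (v : ℕ) < m} s
  simp only [Fin.card_filter_val_lt, min_eq_right hmN, Fintype.card_fin, mem_filter, mem_univ,
    true_and] at hcount
  have hpos : (N.descFactorial #s : ℝ) ≠ 0 := by exact_mod_cast (descFactorial_pos.mpr hsN).ne'
  simp only [pE, firstGroupIndicator, sum_boole, Fintype.card_perm, Fintype.card_fin, hcount,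
    ← factorial_mul_descFactorial hsN]
  push_cast
  field_simp

lemma pE_Ux (hmN : m ≤ N) {W : Matrix (Fin N) (Fin N) ℝ} (hd : ∀ i, W i i = 0) :
    pE (Ux W m) = m.descFactorial 2 / N.descFactorial 2 * ∑ i, ∑ j, W i j := by
  simp only [Ux_eq_sum_firstGroupIndicator, pE_sum, pE_const_mul, pE_firstGroupIndicator m hmN,
    mul_sum]
  refine sum_congr rfl fun i _ => sum_congr rfl fun j _ => ?_
  rcases eq_or_ne i j with rfl | hij
  · simp [hd]
  · rw [card_pair hij, mul_comm]

lemma pE_Ux_mul_Ux (hmN : m ≤ N) (W W' : Matrix (Fin N) (Fin N) ℝ) :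
    pE (fun π => Ux W m π * Ux W' m π) = ∑ i, ∑ j, ∑ k, ∑ l, W i j * W' k l *
      (m.descFactorial #({i, j} ∪ {k, l}) / N.descFactorial #({i, j} ∪ {k, l})) := by
  simp only [Ux_eq_sum_firstGroupIndicator, sum_mul_sum,
    mul_mul_mul_comm _ (firstGroupIndicator m _ _), firstGroupIndicator_mul, pE_sum, pE_const_mul,
    pE_firstGroupIndicator m hmN]
  exact sum_congr rfl fun _ _ => sum_comm

end Permutations

theorem stmt_2 (m n N : ℕ) (hm : 2 ≤ m) (hn : 2 ≤ n) (hN : N = m + n)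
    (W W' : Matrix (Fin N) (Fin N) ℝ)
    (hsym : W.IsSymm) (hdiag : ∀ i, W i i = 0)
    (hsym' : W'.IsSymm) (hdiag' : ∀ i, W' i i = 0) :
    pCov (Ux W m) (Ux W' m) =
      (2 * (m : ℝ) * (n : ℝ) / ((N : ℝ) * ((N : ℝ) - 1) * ((N : ℝ) - 2) * ((N : ℝ) - 3)))
        * ((m : ℝ) - 1) *
        (((n : ℝ) - 1) *
            ((∑ i, ∑ j, W i j * W' i j)
              - (∑ i, ∑ j, W i j) * (∑ i, ∑ j, W' i j) / ((N : ℝ) * ((N : ℝ) - 1)))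
          + 2 * ((m : ℝ) - 2) *
            ((∑ i, ∑ j, ∑ r, W i j * W' i r)
              - (∑ i, ∑ j, W i j) * (∑ i, ∑ j, W' i j) / (N : ℝ))) := by
  have hmN : m ≤ N := by omega
  have hN4 : (4 : ℝ) ≤ N := by exact_mod_cast (by omega : 4 ≤ N)
  have hn_eq : (n : ℝ) = N - m := by rw [hN]; push_cast; ring
  rw [pCov_eq_pE_mul_sub_mul, pE_Ux_mul_Ux m hmN,
    sum_mul_mul_apply_card_pair_union_pair hsym hdiag hsym' hdiag'
      (fun t => (m.descFactorial t : ℝ) / N.descFactorial t),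
    pE_Ux m hmN hdiag, pE_Ux m hmN hdiag']
  simp only [← descPochhammer_eval_eq_descFactorial ℝ, descPochhammer_succ_eval,
    descPochhammer_zero, Polynomial.eval_one, Nat.cast_zero, Nat.cast_one, Nat.cast_ofNat,
    sub_zero, one_mul, hn_eq]
  have h0 : (N : ℝ) ≠ 0 := by linarith
  have h1 : (N : ℝ) - 1 ≠ 0 := by linarith
  have h2 : (N : ℝ) - 2 ≠ 0 := by linarith
  have h3 : (N : ℝ) - 3 ≠ 0 := by linarith
  field_simp
  ring
end

section
/- Under the same setup (two symmetric zero-diagonal N×N matrices W, W', N = m+n, uniform random permutation), with U_x the within-X sum of W and U'_y the within-Y sum of W', one has Cov(U_x, U'_y) = C(m−1)(n−1)(W̃_2 − 2W̃_3), where C = 2mn/(N(N−1)(N−2)(N−3)), W̃_2 = Σ_{i,j} W_{ij}W'_{ij} − W_1 W'_1/(N(N−1)), and W̃_3 = Σ_{i,j,r} W_{ij}W'_{ir} − W_1 W'_1/N. -/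
/-!
Write `Ux W m * Uy W' m` as a sum over quadruples `(i, j, k, l)` of `W i j * W' k l` times the
indicator that `π i, π j` fall in the first group and `π k, π l` in the second. Zero diagonals and
disjointness of the groups leave only pairwise distinct quadruples, i.e. embeddings
`Fin 4 ↪ Fin N`. Permutations act transitively on embeddings, so averaging over `π` replaces the
indicator by its mean over all embeddings, `m(m-1)n(n-1)/(N(N-1)(N-2)(N-3))`, and the sum of
`W i j * W' k l` over distinct quadruples is `W₁ W'₁ - 4 ∑ W i j * W' i r + 2 ∑ W i j * W' i j`
by inclusion–exclusion on the coincidences `{i, j} ∩ {k, l} ≠ ∅`. The same argument with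
embeddings of `Fin 2` gives the means of `Ux` and `Uy`.
-/

open Finset

open Function

namespace MulAction

variable {G X M : Type*} [Group G] [Fintype G] [MulAction G X] [IsPretransitive G X]
  [AddCommMonoid M]

theorem sum_smul_eq_sum_smul (f : X → M) (x y : X) :
    ∑ g : G, f (g • x) = ∑ g : G, f (g • y) := by
  obtain ⟨σ, rfl⟩ := exists_smul_eq G x y
  simp_rw [smul_smul]
  exact (Equiv.sum_comp (Equiv.mulRight σ) fun g => f (g • x)).symm

theorem card_nsmul_sum_smul [Fintype X] (f : X → M) (x : X) :
    Fintype.card X • ∑ g : G, f (g • x) = Fintype.card G • ∑ y, f y := by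
  calc Fintype.card X • ∑ g : G, f (g • x) = ∑ y : X, ∑ g : G, f (g • y) := by
        rw [← Finset.card_univ, ← Finset.sum_const]
        exact Finset.sum_congr rfl fun y _ => sum_smul_eq_sum_smul f x y
    _ = ∑ _g : G, ∑ y : X, f y := by
        rw [Finset.sum_comm]
        exact Finset.sum_congr rfl fun g _ => Equiv.sum_comp (toPerm g) f
    _ = Fintype.card G • ∑ y, f y := by rw [Finset.sum_const, Finset.card_univ]

end MulAction

theorem Fintype.sum_fin_succ_pi {α M : Type*} [Fintype α] [AddCommMonoid M] {n : ℕ}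
    (φ : (Fin (n + 1) → α) → M) :
    ∑ v, φ v = ∑ a, ∑ v : Fin n → α, φ (Fin.cons a v) := by
  rw [← Fintype.sum_prod_type']
  exact (Fintype.sum_equiv (Fin.consEquiv fun _ => α) _ _ fun _ => rfl).symm

namespace Function.Embedding

variable {α M : Type*} [Fintype α] [DecidableEq α] [AddCommMonoid M]

theorem sum_eq_sum_ite_injective {κ : Type*} [Fintype κ] [DecidableEq κ] (φ : (κ → α) → M) :
    ∑ u : κ ↪ α, φ u = ∑ v : κ → α, if Injective v then φ v else 0 := by
  rw [← (Equiv.subtypeInjectiveEquivEmbedding κ α).sum_comp, ← Finset.sum_filter]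
  exact (Finset.sum_subtype _ (by simp) _).symm

theorem sum_fin_two (h : α → α → M) :
    ∑ u : Fin 2 ↪ α, h (u 0) (u 1) = ∑ i, ∑ j, if i ≠ j then h i j else 0 := by
  rw [sum_eq_sum_ite_injective fun v => h (v 0) (v 1)]
  simp only [Fintype.sum_fin_succ_pi, Fintype.sum_unique, Fin.cons_injective_iff, Fin.range_cons,
    injective_of_subsingleton, Set.range_eq_empty]
  simp only [Set.mem_insert_iff, Set.mem_empty_iff_false, or_false, and_true, ne_eq]
  rfl

theorem sum_fin_four (h : α → α → α → α → M) :
    ∑ u : Fin 4 ↪ α, h (u 0) (u 1) (u 2) (u 3) =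
      ∑ i, ∑ j, ∑ k, ∑ l,
        if i ≠ j ∧ i ≠ k ∧ i ≠ l ∧ j ≠ k ∧ j ≠ l ∧ k ≠ l then h i j k l else 0 := by
  rw [sum_eq_sum_ite_injective fun v => h (v 0) (v 1) (v 2) (v 3)]
  simp only [Fintype.sum_fin_succ_pi, Fintype.sum_unique, Fin.cons_injective_iff, Fin.range_cons,
    injective_of_subsingleton, Set.range_eq_empty]
  simp only [Set.mem_insert_iff, Set.mem_empty_iff_false, or_false, not_or, and_true, and_assoc,
    ne_eq]
  rfl

theorem sum_fin_two_of_apply_self (h : α → α → M) (hh : ∀ i, h i i = 0) :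
    ∑ u : Fin 2 ↪ α, h (u 0) (u 1) = ∑ i, ∑ j, h i j := by
  rw [sum_fin_two]
  refine Finset.sum_congr rfl fun i _ => Finset.sum_congr rfl fun j _ => ?_
  by_cases hij : i = j
  · simp [hij, hh]
  · simp [hij]

theorem sum_fin_four_of_ne_zero (h : α → α → α → α → M)
    (hh : ∀ i j k l, h i j k l ≠ 0 → i ≠ j ∧ i ≠ k ∧ i ≠ l ∧ j ≠ k ∧ j ≠ l ∧ k ≠ l) :
    ∑ u : Fin 4 ↪ α, h (u 0) (u 1) (u 2) (u 3) = ∑ i, ∑ j, ∑ k, ∑ l, h i j k l := by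
  rw [sum_fin_four]
  refine Finset.sum_congr rfl fun i _ => Finset.sum_congr rfl fun j _ =>
    Finset.sum_congr rfl fun k _ => Finset.sum_congr rfl fun l _ => ?_
  split_ifs with hd
  · rfl
  · exact (not_imp_comm.mp (hh i j k l) hd).symm

end Function.Embedding

namespace Equiv.Perm

variable {α : Type*} [Fintype α] [DecidableEq α]

theorem card_embedding_mul_sum_sum_smul {κ : Type*} [Fintype κ] (F g : (κ ↪ α) → ℝ) :
    (Fintype.card (κ ↪ α) : ℝ) * ∑ π : Perm α, ∑ u, F u * g (π • u) =
      Fintype.card (Perm α) * ((∑ u, F u) * ∑ u, g u) := by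
  have : MulAction.IsPretransitive (Perm α) (κ ↪ α) := ⟨exists_smul_eq_embedding⟩
  have hmean (u : κ ↪ α) :
      (Fintype.card (κ ↪ α) : ℝ) * ∑ π : Perm α, g (π • u) = Fintype.card (Perm α) * ∑ v, g v := by
    simpa only [nsmul_eq_mul] using MulAction.card_nsmul_sum_smul g u
  rw [Finset.sum_comm, Finset.mul_sum, Finset.sum_mul, Finset.mul_sum]
  refine Finset.sum_congr rfl fun u _ => ?_
  rw [← Finset.mul_sum, mul_left_comm, hmean]
  ring

end Equiv.Perm

namespace Matrix.IsSymm

variable {α : Type*} [Fintype α] [DecidableEq α] {M M' : Matrix α α ℝ}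

theorem sum_compl_pair_sum_compl_pair (hM : M.IsSymm) {i j : α} (hij : i ≠ j) :
    ∑ k ∈ {i, j}ᶜ, ∑ l ∈ {i, j}ᶜ, M k l
      = ∑ k, ∑ l, M k l - 2 * ∑ l, M i l - 2 * ∑ l, M j l + M i i + M j j + 2 * M i j := by
  have hcol (a : α) : ∑ k, M k a = ∑ l, M a l := Finset.sum_congr rfl fun k _ => hM.apply a k
  have hcompl (f : α → ℝ) : ∑ k ∈ {i, j}ᶜ, f k = ∑ k, f k - f i - f j := by
    linarith [Finset.sum_compl_add_sum {i, j} f, Finset.sum_pair hij (f := f)]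
  simp only [hcompl, Finset.sum_sub_distrib, hcol, hM.apply j i]
  ring

theorem sum_embedding_fin_four_mul (hM : M.IsSymm) (hM0 : ∀ i, M i i = 0)
    (hM' : M'.IsSymm) (hM'0 : ∀ i, M' i i = 0) :
    ∑ u : Fin 4 ↪ α, M (u 0) (u 1) * M' (u 2) (u 3) =
      (∑ i, ∑ j, M i j) * (∑ i, ∑ j, M' i j) - 4 * (∑ i, ∑ j, ∑ r, M i j * M' i r)
        + 2 * (∑ i, ∑ j, M i j * M' i j) := by
  have hpeel (i j : α) :
      (∑ k, ∑ l, if i ≠ j ∧ i ≠ k ∧ i ≠ l ∧ j ≠ k ∧ j ≠ l ∧ k ≠ l then M i j * M' k l else 0)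
        = M i j * (∑ k, ∑ l, M' k l) - 2 * (M i j * ∑ r, M' i r)
          - 2 * (M i j * ∑ r, M' j r) + 2 * (M i j * M' i j) := by
    by_cases hij : i = j
    · subst hij
      simp [hM0]
    -- `k ≠ l` can be dropped because `M'` has zero diagonal
    calc _ = ∑ k, ∑ l,
          if k ∈ ({i, j} : Finset α)ᶜ then (if l ∈ ({i, j} : Finset α)ᶜ then M i j * M' k l else 0)
            else 0 := by
          refine Finset.sum_congr rfl fun k _ => Finset.sum_congr rfl fun l _ => ?_
          by_cases hkl : k = l
          · subst hkl
            simp [hM'0]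
          simp only [mem_compl, mem_insert, mem_singleton]
          split_ifs <;> grind
      _ = M i j * ∑ k ∈ {i, j}ᶜ, ∑ l ∈ {i, j}ᶜ, M' k l := by
          simp only [Finset.sum_ite_irrel, Finset.sum_const_zero, Finset.sum_ite_mem, univ_inter,
            Finset.mul_sum]
      _ = _ := by
          rw [hM'.sum_compl_pair_sum_compl_pair hij, hM'0, hM'0]
          ring
  have hcol : ∑ i, ∑ j, M i j * ∑ r, M' j r = ∑ i, ∑ j, ∑ r, M i j * M' i r := by
    rw [Finset.sum_comm]
    simp only [← hM.apply, Finset.mul_sum]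
  rw [Function.Embedding.sum_fin_four fun i j k l => M i j * M' k l]
  simp only [hpeel, Finset.sum_add_distrib, Finset.sum_sub_distrib, ← Finset.mul_sum,
    ← Finset.sum_mul, hcol]
  ring

end Matrix.IsSymm

section WithinSum

variable {α : Type*} [Fintype α] [DecidableEq α] (p q : α → Prop) [DecidablePred p]
  [DecidablePred q] {W W' : Matrix α α ℝ}

noncomputable def withinSum (W : Matrix α α ℝ) (π : Equiv.Perm α) : ℝ :=
  ∑ i, ∑ j, if p (π i) ∧ p (π j) then W i j else 0

theorem sum_sum_ite_ne_ite_and :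
    ∑ i, ∑ j, (if i ≠ j then (if p i ∧ p j then 1 else 0) else 0 : ℝ) =
      #{a | p a} * (#{a | p a} - 1) := by
  have h (i j : α) : (if i ≠ j then (if p i ∧ p j then 1 else 0) else 0 : ℝ)
      = (if p i then 1 else 0) * (if p j then 1 else 0)
          - if i = j then (if p i then 1 else 0) else 0 := by
    by_cases hij : i = j
    · subst hij; split_ifs <;> simp_all
    · split_ifs <;> simp_all
  simp only [h, Finset.sum_sub_distrib, ← Finset.mul_sum, ← Finset.sum_mul, Finset.sum_ite_eq,
    mem_univ, if_true, Finset.sum_boole]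
  ring

theorem withinSum_eq_sum_embedding (hW0 : ∀ i, W i i = 0) (π : Equiv.Perm α) :
    withinSum p W π =
      ∑ u : Fin 2 ↪ α, W (u 0) (u 1) * (if p ((π • u) 0) ∧ p ((π • u) 1) then 1 else 0) := by
  simp only [Function.Embedding.smul_apply, Equiv.Perm.smul_def]
  refine Eq.trans ?_ (Function.Embedding.sum_fin_two_of_apply_self
    (fun i j => W i j * if p (π i) ∧ p (π j) then 1 else 0) (by simp [hW0])).symm
  simp [withinSum]

theorem withinSum_mul_withinSum_eq_sum_embedding (hpq : ∀ a, ¬(p a ∧ q a))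
    (hW0 : ∀ i, W i i = 0) (hW'0 : ∀ i, W' i i = 0) (π : Equiv.Perm α) :
    withinSum p W π * withinSum q W' π =
      ∑ u : Fin 4 ↪ α, W (u 0) (u 1) * W' (u 2) (u 3) *
        ((if p ((π • u) 0) ∧ p ((π • u) 1) then 1 else 0) *
          (if q ((π • u) 2) ∧ q ((π • u) 3) then 1 else 0)) := by
  simp only [Function.Embedding.smul_apply, Equiv.Perm.smul_def]
  refine Eq.trans ?_ (Function.Embedding.sum_fin_four_of_ne_zero (fun i j k l => W i j * W' k l *
    ((if p (π i) ∧ p (π j) then 1 else 0) * (if q (π k) ∧ q (π l) then 1 else 0))) ?_).symm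
  · simp only [withinSum, Finset.sum_mul]
    simp only [Finset.mul_sum]
    refine Finset.sum_congr rfl fun i _ => Finset.sum_congr rfl fun j _ =>
      Finset.sum_congr rfl fun k _ => Finset.sum_congr rfl fun l _ => ?_
    split_ifs <;> simp
  · intro i j k l hne
    refine ⟨?_, ?_, ?_, ?_, ?_, ?_⟩ <;> rintro rfl <;> simp_all <;> grind

theorem sum_embedding_fin_four_ite_and_mul_ite_and (hpq : ∀ a, ¬(p a ∧ q a)) :
    ∑ u : Fin 4 ↪ α,
        ((if p (u 0) ∧ p (u 1) then 1 else 0) * (if q (u 2) ∧ q (u 3) then 1 else 0) : ℝ) =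
      #{a | p a} * (#{a | p a} - 1) * (#{a | q a} * (#{a | q a} - 1)) := by
  rw [Function.Embedding.sum_fin_four fun i j k l =>
    ((if p i ∧ p j then 1 else 0) * (if q k ∧ q l then 1 else 0) : ℝ)]
  have h (i j k l : α) :
      (if i ≠ j ∧ i ≠ k ∧ i ≠ l ∧ j ≠ k ∧ j ≠ l ∧ k ≠ l then
          ((if p i ∧ p j then 1 else 0) * (if q k ∧ q l then 1 else 0) : ℝ) else 0) =
        (if i ≠ j then (if p i ∧ p j then 1 else 0) else 0) *
          (if k ≠ l then (if q k ∧ q l then 1 else 0) else 0) := by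
    have hne (a b : α) (ha : p a) (hb : q b) : a ≠ b := fun hab => hpq b ⟨hab ▸ ha, hb⟩
    split_ifs <;> simp_all
  simp only [h, ← Finset.mul_sum, ← Finset.sum_mul, sum_sum_ite_ne_ite_and]

theorem card_mul_sum_withinSum (hW0 : ∀ i, W i i = 0) :
    (Fintype.card (Fin 2 ↪ α) : ℝ) * ∑ π, withinSum p W π =
      Fintype.card (Equiv.Perm α) * ((∑ i, ∑ j, W i j) * (#{a | p a} * (#{a | p a} - 1))) := by
  simp only [withinSum_eq_sum_embedding p hW0]
  refine (Equiv.Perm.card_embedding_mul_sum_sum_smul (fun u => W (u 0) (u 1))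
    (fun v => if p (v 0) ∧ p (v 1) then 1 else 0)).trans ?_
  rw [Function.Embedding.sum_fin_two_of_apply_self (fun i j => W i j) hW0,
    Function.Embedding.sum_fin_two fun i j => if p i ∧ p j then (1 : ℝ) else 0,
    sum_sum_ite_ne_ite_and]

theorem card_mul_sum_withinSum_mul_withinSum (hpq : ∀ a, ¬(p a ∧ q a)) (hW : W.IsSymm)
    (hW0 : ∀ i, W i i = 0) (hW' : W'.IsSymm) (hW'0 : ∀ i, W' i i = 0) :
    (Fintype.card (Fin 4 ↪ α) : ℝ) * ∑ π, withinSum p W π * withinSum q W' π =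
      Fintype.card (Equiv.Perm α) *
        (((∑ i, ∑ j, W i j) * (∑ i, ∑ j, W' i j) - 4 * (∑ i, ∑ j, ∑ r, W i j * W' i r)
            + 2 * (∑ i, ∑ j, W i j * W' i j)) *
          (#{a | p a} * (#{a | p a} - 1) * (#{a | q a} * (#{a | q a} - 1)))) := by
  simp only [withinSum_mul_withinSum_eq_sum_embedding p q hpq hW0 hW'0]
  refine (Equiv.Perm.card_embedding_mul_sum_sum_smul (fun u => W (u 0) (u 1) * W' (u 2) (u 3))
    (fun v => (if p (v 0) ∧ p (v 1) then 1 else 0) * (if q (v 2) ∧ q (v 3) then 1 else 0))).trans ?_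
  rw [hW.sum_embedding_fin_four_mul hW0 hW' hW'0,
    sum_embedding_fin_four_ite_and_mul_ite_and p q hpq]

end WithinSum

theorem Fin.card_filter_le_val (n m : ℕ) : #{i : Fin n | m ≤ (i : ℕ)} = n - m := by
  have h := card_filter_add_card_filter_not (s := univ) fun i : Fin n => (i : ℕ) < m
  simp only [not_lt, Fin.card_filter_val_lt, card_univ, Fintype.card_fin] at h
  omega

theorem Nat.cast_descFactorial_four {R : Type*} [CommRing R] {N : ℕ} (h : 3 ≤ N) :
    (N.descFactorial 4 : R) = N * (N - 1) * (N - 2) * (N - 3) := by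
  simp [Nat.descFactorial_succ, Nat.cast_sub h, Nat.cast_sub (by omega : 2 ≤ N),
    Nat.cast_sub (by omega : 1 ≤ N)]
  ring

theorem pCov_eq_pE_mul_sub {N : ℕ} (f g : Equiv.Perm (Fin N) → ℝ) :
    pCov f g = pE (fun π => f π * g π) - pE f * pE g := by
  have hc : (Fintype.card (Equiv.Perm (Fin N)) : ℝ) ≠ 0 := by positivity
  simp only [pCov, pE, sub_mul, mul_sub, Finset.sum_sub_distrib, ← Finset.sum_mul,
    ← Finset.mul_sum, Finset.sum_const, Finset.card_univ, nsmul_eq_mul]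
  field_simp
  ring

theorem stmt_3 (m n N : ℕ) (hm : 2 ≤ m) (hn : 2 ≤ n) (hN : N = m + n)
    (W W' : Matrix (Fin N) (Fin N) ℝ)
    (hsym : W.IsSymm) (hdiag : ∀ i, W i i = 0)
    (hsym' : W'.IsSymm) (hdiag' : ∀ i, W' i i = 0) :
    pCov (Ux W m) (Uy W' m) =
      (2 * (m : ℝ) * (n : ℝ) / ((N : ℝ) * ((N : ℝ) - 1) * ((N : ℝ) - 2) * ((N : ℝ) - 3)))
        * ((m : ℝ) - 1) * ((n : ℝ) - 1) *
        (((∑ i, ∑ j, W i j * W' i j)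
            - (∑ i, ∑ j, W i j) * (∑ i, ∑ j, W' i j) / ((N : ℝ) * ((N : ℝ) - 1)))
          - 2 * ((∑ i, ∑ j, ∑ r, W i j * W' i r)
            - (∑ i, ∑ j, W i j) * (∑ i, ∑ j, W' i j) / (N : ℝ))) := by
  subst hN
  have hpq (a : Fin (m + n)) : ¬((a : ℕ) < m ∧ m ≤ (a : ℕ)) := fun h => (not_lt.2 h.2) h.1
  have hx := card_mul_sum_withinSum (fun a : Fin (m + n) => (a : ℕ) < m) hdiag
  have hy := card_mul_sum_withinSum (fun a : Fin (m + n) => m ≤ (a : ℕ)) hdiag'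
  have hxy := card_mul_sum_withinSum_mul_withinSum _ _ hpq hsym hdiag hsym' hdiag'
  simp only [Fintype.card_embedding_eq, Fintype.card_fin, Fin.card_filter_val_lt,
    Fin.card_filter_le_val, min_eq_right (Nat.le_add_right m n), Nat.add_sub_cancel_left,
    Nat.cast_descFactorial_two, Nat.cast_descFactorial_four (by omega : 3 ≤ m + n),
    Nat.cast_add] at hx hy hxy
  have hmn : (4 : ℝ) ≤ m + n := by exact_mod_cast (by omega : 4 ≤ m + n)
  have h0 : (m + n : ℝ) ≠ 0 := by linarith
  have h1 : (m + n : ℝ) - 1 ≠ 0 := by linarith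
  have h2 : (m + n : ℝ) - 2 ≠ 0 := by linarith
  have h3 : (m + n : ℝ) - 3 ≠ 0 := by linarith
  have hc : (Fintype.card (Equiv.Perm (Fin (m + n))) : ℝ) ≠ 0 := by positivity
  rw [pCov_eq_pE_mul_sub, show Ux W m = withinSum (fun a : Fin (m + n) => (a : ℕ) < m) W from rfl,
    show Uy W' m = withinSum (fun a : Fin (m + n) => m ≤ (a : ℕ)) W' from rfl]
  simp only [pE]
  rw [eq_div_of_mul_eq (mul_ne_zero h0 h1) ((mul_comm _ _).trans hx),
    eq_div_of_mul_eq (mul_ne_zero h0 h1) ((mul_comm _ _).trans hy),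
    eq_div_of_mul_eq (mul_ne_zero (mul_ne_zero (mul_ne_zero h0 h1) h2) h3)
      ((mul_comm _ _).trans hxy)]
  push_cast
  field_simp
  ring
end

section
/- Let X, Y ∈ ℝ^d be independent random vectors with independent coordinates such that E‖X − EX‖₂²/d → σ₁², E‖Y − EY‖₂²/d → σ₂², and ‖EX − EY‖₂²/d → υ² as d → ∞, with uniformly bounded fourth coordinate moments. If X, X' are i.i.d. and Y, Y' are i.i.d., then ‖X − X'‖₂/√d → √2·σ₁, ‖Y − Y'‖₂/√d → √2·σ₂, and ‖X − Y‖₂/√d → √(σ₁² + σ₂² + υ²), all in probability as d → ∞. -/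
/-! Write `m_j = E X_j − E Y_j`. The squared distance `‖X − Y‖²` is a sum of `d` independent terms
`(X_j − Y_j)²` with means `Var X_j + Var Y_j + m_j²`, and the fourth-moment bound `C` gives
`Var (X_j − Y_j)² ≤ 32 C + 16 √C m_j²`. Hence `Var ‖X − Y‖² = O(d + ‖EX − EY‖²) = o(d²)`, and
Chebyshev's inequality gives `‖X − Y‖² / d → σ₁² + σ₂² + υ²` in probability. Taking square roots
preserves this since `|√a − √b| ≤ √|a − b|`. For `X, X'` the means agree, so `υ = 0`. -/

open Filter MeasureTheory ProbabilityTheory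
open scoped Topology

lemma Real.abs_sqrt_sub_sqrt_le (a b : ℝ) : |√a - √b| ≤ √|a - b| := by
  refine Real.abs_le_sqrt ?_
  rcases le_total 0 a with ha | ha <;> rcases le_total 0 b with hb | hb
  · have := Real.sq_sqrt ha
    have := Real.sq_sqrt hb
    have := Real.sqrt_nonneg a
    have := Real.sqrt_nonneg b
    rcases le_total a b with h | h
    · have := Real.sqrt_le_sqrt h
      rw [abs_of_nonpos (by linarith)]; nlinarith
    · have := Real.sqrt_le_sqrt h
      rw [abs_of_nonneg (by linarith)]; nlinarith
  · rw [Real.sqrt_eq_zero'.2 hb, sub_zero, Real.sq_sqrt ha, abs_of_nonneg (by linarith)]; linarith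
  · rw [Real.sqrt_eq_zero'.2 ha, zero_sub, neg_sq, Real.sq_sqrt hb, abs_of_nonpos (by linarith)]
    linarith
  · simp [Real.sqrt_eq_zero'.2 ha, Real.sqrt_eq_zero'.2 hb]

section

variable {Ω : Type*} [MeasurableSpace Ω] {μ : Measure Ω}

section Moments

variable {X Y : Ω → ℝ}

lemma MeasureTheory.MemLp.sq_of_four (hX : MemLp X 4 μ) : MemLp (X ^ 2) 2 μ := by
  have : ENNReal.HolderTriple 4 4 2 := ⟨by
    rw [show (4 : ENNReal) = 2 * 2 by norm_num, ENNReal.mul_inv (by simp) (by simp), ← add_mul,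
      ENNReal.inv_two_add_inv_two, one_mul]⟩
  simpa [sq] using hX.mul hX

lemma MeasureTheory.MemLp.integrable_pow_four (hX : MemLp X 4 μ) :
    Integrable (fun ω => X ω ^ 4) μ := by
  simpa only [Pi.pow_apply, ← pow_mul] using hX.sq_of_four.integrable_sq

lemma centralMoment_four_eq_integral_abs (X : Ω → ℝ) (μ : Measure Ω) :
    centralMoment X 4 μ = ∫ ω, |X ω - μ[X]| ^ 4 ∂μ := by
  simp [centralMoment, (by decide : Even 4).pow_abs]

lemma ProbabilityTheory.IdentDistrib.centralMoment_eq {Ω' : Type*} [MeasurableSpace Ω']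
    {ν : Measure Ω'} {Y : Ω' → ℝ} (h : IdentDistrib X Y μ ν) (p : ℕ) :
    centralMoment X p μ = centralMoment Y p ν := by
  have := (h.comp ((measurable_id.sub_const μ[X]).pow_const p)).integral_eq
  simpa [centralMoment, h.integral_eq] using this

lemma variance_add_le [IsFiniteMeasure μ] (hX : MemLp X 2 μ) (hY : MemLp Y 2 μ) :
    Var[X + Y; μ] ≤ 2 * Var[X; μ] + 2 * Var[Y; μ] := by
  linarith [variance_add hX hY, variance_sub hX hY, variance_nonneg (X - Y) μ]

variable [IsProbabilityMeasure μ]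

lemma variance_centered_sq_le_centralMoment_four (hX : MemLp X 4 μ) :
    Var[fun ω => (X ω - μ[X]) ^ 2; μ] ≤ centralMoment X 4 μ := by
  refine (variance_le_expectation_sq
    (hX.sub (memLp_const _)).sq_of_four.aestronglyMeasurable).trans_eq ?_
  simp only [centralMoment, ← pow_mul]

lemma sq_variance_le_centralMoment_four (hX : MemLp X 4 μ) :
    Var[X; μ] ^ 2 ≤ centralMoment X 4 μ := by
  have hW : MemLp (fun ω => (X ω - μ[X]) ^ 2) 2 μ := (hX.sub (memLp_const _)).sq_of_four
  have hvar : Var[X; μ] = ∫ ω, (X ω - μ[X]) ^ 2 ∂μ := variance_eq_integral hX.aemeasurable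
  have h4 : ∫ ω, ((X ω - μ[X]) ^ 2) ^ 2 ∂μ = centralMoment X 4 μ := by
    simp only [centralMoment, ← pow_mul]; rfl
  have h := variance_eq_sub hW
  simp only [Pi.pow_apply] at h
  rw [h4, ← hvar] at h
  linarith [variance_nonneg (fun ω => (X ω - μ[X]) ^ 2) μ]

lemma variance_sq_le (hX : MemLp X 4 μ) :
    Var[X ^ 2; μ] ≤ 2 * centralMoment X 4 μ + 8 * μ[X] ^ 2 * Var[X; μ] := by
  set m := μ[X]
  have hW : MemLp (fun ω => (X ω - m) ^ 2) 2 μ := (hX.sub (memLp_const m)).sq_of_four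
  have hL : MemLp (fun ω => 2 * m * X ω) 2 μ := (hX.mono_exponent (by norm_num)).const_mul _
  have hsplit : Var[X ^ 2; μ] = Var[(fun ω => (X ω - m) ^ 2) + fun ω => 2 * m * X ω; μ] := by
    rw [← variance_sub_const (hW.add hL).aestronglyMeasurable (m ^ 2)]
    congr 1; ext ω; simp only [Pi.pow_apply, Pi.add_apply]; ring
  calc _ ≤ 2 * Var[fun ω => (X ω - m) ^ 2; μ] + 2 * Var[fun ω => 2 * m * X ω; μ] :=
        hsplit ▸ variance_add_le hW hL
    _ ≤ _ := by
        rw [variance_const_mul]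
        linarith [variance_centered_sq_le_centralMoment_four hX]

lemma centralMoment_sub_four_le (hX : MemLp X 4 μ) (hY : MemLp Y 4 μ) :
    centralMoment (X - Y) 4 μ ≤ 8 * (centralMoment X 4 μ + centralMoment Y 4 μ) := by
  have hXc : Integrable (fun ω => (X ω - μ[X]) ^ 4) μ :=
    (hX.sub (memLp_const _)).integrable_pow_four
  have hYc : Integrable (fun ω => (Y ω - μ[Y]) ^ 4) μ :=
    (hY.sub (memLp_const _)).integrable_pow_four
  have hXY : Integrable (fun ω => (X ω - Y ω - (μ[X] - μ[Y])) ^ 4) μ :=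
    ((hX.sub hY).sub (memLp_const _)).integrable_pow_four
  simp only [centralMoment, Pi.pow_apply, Pi.sub_apply]
  rw [integral_sub (hX.integrable (by norm_num)) (hY.integrable (by norm_num)),
    ← integral_add hXc hYc, ← integral_const_mul]
  refine integral_mono hXY ((hXc.add hYc).const_mul 8) fun ω => ?_
  have key (a b : ℝ) : (a - b) ^ 4 ≤ 8 * (a ^ 4 + b ^ 4) := by
    nlinarith [sq_nonneg (a + b), sq_nonneg (a - b), sq_nonneg (a ^ 2 - b ^ 2)]
  simpa only [sub_sub_sub_comm] using key (X ω - μ[X]) (Y ω - μ[Y])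

lemma ProbabilityTheory.IndepFun.variance_sub (hX : MemLp X 2 μ) (hY : MemLp Y 2 μ)
    (h : IndepFun X Y μ) : Var[X - Y; μ] = Var[X; μ] + Var[Y; μ] := by
  rw [ProbabilityTheory.variance_sub hX hY, h.covariance_eq_zero hX hY]
  ring

lemma ProbabilityTheory.IndepFun.integral_sub_sq (hX : MemLp X 2 μ) (hY : MemLp Y 2 μ)
    (h : IndepFun X Y μ) :
    ∫ ω, (X ω - Y ω) ^ 2 ∂μ = Var[X; μ] + Var[Y; μ] + (μ[X] - μ[Y]) ^ 2 := by
  have hvar := variance_eq_sub (hX.sub hY)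
  simp only [Pi.pow_apply, Pi.sub_apply] at hvar
  rw [h.variance_sub hX hY, integral_sub (hX.integrable one_le_two) (hY.integrable one_le_two)]
    at hvar
  linarith

lemma ProbabilityTheory.IndepFun.variance_sub_sq_le {C : ℝ} (hX : MemLp X 4 μ) (hY : MemLp Y 4 μ)
    (h : IndepFun X Y μ) (hCX : centralMoment X 4 μ ≤ C) (hCY : centralMoment Y 4 μ ≤ C) :
    Var[fun ω => (X ω - Y ω) ^ 2; μ] ≤ 32 * C + 16 * √C * (μ[X] - μ[Y]) ^ 2 := by
  have hX2 : MemLp X 2 μ := hX.mono_exponent (by norm_num)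
  have hY2 : MemLp Y 2 μ := hY.mono_exponent (by norm_num)
  have hvX : Var[X; μ] ≤ √C :=
    Real.le_sqrt_of_sq_le ((sq_variance_le_centralMoment_four hX).trans hCX)
  have hvY : Var[Y; μ] ≤ √C :=
    Real.le_sqrt_of_sq_le ((sq_variance_le_centralMoment_four hY).trans hCY)
  have hmean : μ[X - Y] = μ[X] - μ[Y] :=
    integral_sub (hX.integrable (by norm_num)) (hY.integrable (by norm_num))
  have hsq := variance_sq_le (hX.sub hY)
  rw [h.variance_sub hX2 hY2, hmean] at hsq
  have := centralMoment_sub_four_le hX hY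
  have := mul_le_mul_of_nonneg_left (add_le_add hvX hvY) (sq_nonneg (μ[X] - μ[Y]))
  exact hsq.trans (by linarith)

end Moments

section WeakLaw

variable {ι : Type*} {l : Filter ι}

lemma MeasureTheory.TendstoInMeasure.sqrt {g : ι → Ω → ℝ} {c : ℝ}
    (h : TendstoInMeasure μ g l fun _ => c) :
    TendstoInMeasure μ (fun i ω => √(g i ω)) l fun _ => √c := by
  rw [tendstoInMeasure_iff_dist] at h ⊢
  intro ε hε
  refine tendsto_of_tendsto_of_tendsto_of_le_of_le tendsto_const_nhds (h (ε ^ 2) (by positivity))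
    (fun _ => zero_le) fun i => measure_mono fun ω hω => ?_
  simp only [Set.mem_ofPred_eq, Real.dist_eq] at hω ⊢
  by_contra! hlt
  have := Real.sqrt_lt_sqrt (abs_nonneg _) hlt
  rw [Real.sqrt_sq hε.le] at this
  linarith [Real.abs_sqrt_sub_sqrt_le (g i ω) c]

lemma tendstoInMeasure_const_of_variance_tendsto_zero [IsFiniteMeasure μ] {g : ι → Ω → ℝ} {c : ℝ}
    (hg : ∀ i, MemLp (g i) 2 μ) (hmean : Tendsto (fun i => μ[g i]) l (𝓝 c))
    (hvar : Tendsto (fun i => Var[g i; μ]) l (𝓝 0)) :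
    TendstoInMeasure μ g l fun _ => c := by
  rw [tendstoInMeasure_iff_dist]
  intro ε hε
  have hchebyshev : ∀ᶠ i in l,
      μ {ω | ε ≤ dist (g i ω) c} ≤ ENNReal.ofReal (Var[g i; μ] / (ε / 2) ^ 2) := by
    filter_upwards [Metric.tendsto_nhds.mp hmean (ε / 2) (by positivity)] with i hi
    refine le_trans (measure_mono fun ω hω => ?_)
      (meas_ge_le_variance_div_sq (hg i) (by positivity))
    simp only [Set.mem_ofPred_eq, Real.dist_eq] at hω hi ⊢
    linarith [abs_sub_le (g i ω) μ[g i] c]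
  have hbound : Tendsto (fun i => ENNReal.ofReal (Var[g i; μ] / (ε / 2) ^ 2)) l (𝓝 0) := by
    simpa using ENNReal.tendsto_ofReal (hvar.div_const ((ε / 2) ^ 2))
  exact tendsto_of_tendsto_of_tendsto_of_le_of_le' tendsto_const_nhds hbound
    (Eventually.of_forall fun _ => zero_le) hchebyshev

lemma tendstoInMeasure_sum_div_of_pairwise_indepFun [IsFiniteMeasure μ]
    {V : (d : ℕ) → Fin d → Ω → ℝ} {L : ℝ} (hV : ∀ d j, MemLp (V d j) 2 μ)
    (hind : ∀ d, Pairwise fun j k => IndepFun (V d j) (V d k) μ)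
    (hmean : Tendsto (fun d : ℕ => (∑ j, μ[V d j]) / (d : ℝ)) atTop (𝓝 L))
    (hvar : Tendsto (fun d : ℕ => (∑ j, Var[V d j; μ]) / d ^ 2) atTop (𝓝 0)) :
    TendstoInMeasure μ (fun d ω => (∑ j, V d j ω) / (d : ℝ)) atTop fun _ => L := by
  have hsum : ∀ d, MemLp (∑ j, V d j) 2 μ := fun d => memLp_finsetSum' _ fun j _ => hV d j
  refine tendstoInMeasure_const_of_variance_tendsto_zero (fun d => ?_) ?_ ?_
  · simpa only [Finset.sum_apply, div_eq_mul_inv] using (hsum d).mul_const (d : ℝ)⁻¹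
  · refine hmean.congr fun d => ?_
    rw [integral_div, integral_finsetSum _ fun j _ => (hV d j).integrable one_le_two]
  · refine hvar.congr fun d => ?_
    have := variance_mul_const (d : ℝ)⁻¹ (∑ j, V d j) μ
    simp only [Finset.sum_apply] at this
    simp only [div_eq_mul_inv, this, inv_pow,
      IndepFun.variance_sum (fun j _ => hV d j) fun j _ k _ hjk => hind d hjk]

end WeakLaw

section Distances

variable [IsProbabilityMeasure μ]

lemma tendstoInMeasure_sqrt_sum_sub_sq_div_sqrt {A B : (d : ℕ) → Fin d → Ω → ℝ} {C a b v : ℝ}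
    (hA : ∀ d j, MemLp (A d j) 4 μ) (hB : ∀ d j, MemLp (B d j) 4 μ)
    (hAB : ∀ d j, IndepFun (A d j) (B d j) μ)
    (hsq : ∀ d, Pairwise fun j k => IndepFun (fun ω => (A d j ω - B d j ω) ^ 2)
      (fun ω => (A d k ω - B d k ω) ^ 2) μ)
    (hCA : ∀ d j, centralMoment (A d j) 4 μ ≤ C) (hCB : ∀ d j, centralMoment (B d j) 4 μ ≤ C)
    (ha : Tendsto (fun d : ℕ => (∑ j, Var[A d j; μ]) / (d : ℝ)) atTop (𝓝 a))
    (hb : Tendsto (fun d : ℕ => (∑ j, Var[B d j; μ]) / (d : ℝ)) atTop (𝓝 b))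
    (hv : Tendsto (fun d : ℕ => (∑ j, (μ[A d j] - μ[B d j]) ^ 2) / (d : ℝ)) atTop (𝓝 v)) :
    TendstoInMeasure μ (fun d ω => √(∑ j, (A d j ω - B d j ω) ^ 2) / √d) atTop
      fun _ => √(a + b + v) := by
  set T : ℕ → ℝ := fun d => ∑ j, (μ[A d j] - μ[B d j]) ^ 2
  have hmean : ∀ d, ∑ j, ∫ ω, (A d j ω - B d j ω) ^ 2 ∂μ
      = ∑ j, Var[A d j; μ] + ∑ j, Var[B d j; μ] + T d := fun d => by
    simp only [(hAB d _).integral_sub_sq ((hA d _).mono_exponent (by norm_num))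
      ((hB d _).mono_exponent (by norm_num)), Finset.sum_add_distrib, T]
  have hvar : ∀ d, ∑ j, Var[fun ω => (A d j ω - B d j ω) ^ 2; μ] ≤ 32 * C * d + 16 * √C * T d :=
    fun d => (Finset.sum_le_sum fun j _ =>
      (hAB d j).variance_sub_sq_le (hA d j) (hB d j) (hCA d j) (hCB d j)).trans_eq (by
        rw [Finset.sum_add_distrib, Finset.sum_const, Finset.card_univ, Fintype.card_fin,
          nsmul_eq_mul, ← Finset.mul_sum]
        ring)
  have hvar_lim :
      Tendsto (fun d : ℕ => (32 * C * d + 16 * √C * T d) / (d : ℝ) ^ 2) atTop (𝓝 0) := by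
    have : Tendsto (fun d : ℕ => 32 * C / d + 16 * √C * (T d / d) * (1 / d)) atTop (𝓝 0) := by
      simpa using (tendsto_const_div_atTop_nhds_zero_nat (32 * C)).add
        ((hv.const_mul (16 * √C)).mul tendsto_one_div_atTop_nhds_zero_nat)
    refine this.congr' ?_
    filter_upwards [eventually_ne_atTop 0] with d hd
    field_simp
  have hWLLN := tendstoInMeasure_sum_div_of_pairwise_indepFun
    (V := fun d j ω => (A d j ω - B d j ω) ^ 2) (L := a + b + v)
    (fun d j => (((hA d j).sub (hB d j)).sq_of_four)) hsq
    (by simpa only [hmean, add_div] using (ha.add hb).add hv)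
    (squeeze_zero (fun d => div_nonneg (Finset.sum_nonneg fun j _ => variance_nonneg _ _)
        (sq_nonneg _))
      (fun d => div_le_div_of_nonneg_right (hvar d) (by positivity)) hvar_lim)
  refine hWLLN.sqrt.congr_left fun d => Eventually.of_forall fun ω => ?_
  exact Real.sqrt_div (Finset.sum_nonneg fun j _ => sq_nonneg _) _

lemma tendstoInMeasure_sqrt_sum_sub_sq_div_sqrt_of_identDistrib
    {A A' : (d : ℕ) → Fin d → Ω → ℝ} {C σ : ℝ} (hσ : 0 ≤ σ)
    (hA : ∀ d j, MemLp (A d j) 4 μ) (hid : ∀ d j, IdentDistrib (A d j) (A' d j) μ μ)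
    (hAA' : ∀ d j, IndepFun (A d j) (A' d j) μ)
    (hsq : ∀ d, Pairwise fun j k => IndepFun (fun ω => (A d j ω - A' d j ω) ^ 2)
      (fun ω => (A d k ω - A' d k ω) ^ 2) μ)
    (hC : ∀ d j, centralMoment (A d j) 4 μ ≤ C)
    (hσA : Tendsto (fun d : ℕ => (∑ j, Var[A d j; μ]) / (d : ℝ)) atTop (𝓝 (σ ^ 2))) :
    TendstoInMeasure μ (fun d ω => √(∑ j, (A d j ω - A' d j ω) ^ 2) / √d) atTop
      fun _ => √2 * σ := by
  have hσA' : Tendsto (fun d : ℕ => (∑ j, Var[A' d j; μ]) / (d : ℝ)) atTop (𝓝 (σ ^ 2)) := by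
    simpa only [fun d j => (hid d j).variance_eq] using hσA
  have hmean :
      Tendsto (fun d : ℕ => (∑ j, (μ[A d j] - μ[A' d j]) ^ 2) / (d : ℝ)) atTop (𝓝 0) := by
    simp [fun d j => (hid d j).integral_eq]
  have h := tendstoInMeasure_sqrt_sum_sub_sq_div_sqrt hA (fun d j => (hid d j).memLp_snd (hA d j))
    hAA' hsq hC (fun d j => (hid d j).centralMoment_eq 4 ▸ hC d j) hσA hσA' hmean
  rwa [add_zero, ← two_mul, Real.sqrt_mul zero_le_two, Real.sqrt_sq hσ] at h

end Distances

lemma ProbabilityTheory.iIndepFun.indepFun_sub_sq {ι κ : Type*} {F : ι × κ → Ω → ℝ}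
    (h : iIndepFun F μ) (hF : ∀ p, AEMeasurable (F p) μ) (a b : κ) {j k : ι} (hjk : j ≠ k) :
    IndepFun (fun ω => (F (j, a) ω - F (j, b) ω) ^ 2)
      (fun ω => (F (k, a) ω - F (k, b) ω) ^ 2) μ :=
  have hg : Measurable fun q : ℝ × ℝ => (q.1 - q.2) ^ 2 := by fun_prop
  (h.indepFun_prodMk_prodMk₀ hF (j, a) (j, b) (k, a) (k, b)
    (by simp [hjk]) (by simp [hjk]) (by simp [hjk]) (by simp [hjk])).comp hg hg

end

theorem stmt_12_general {Ω : Type*} [MeasurableSpace Ω] (μ : MeasureTheory.Measure Ω)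
    [IsProbabilityMeasure μ]
    (X X' Y Y' : (d : ℕ) → Fin d → Ω → ℝ)
    -- all coordinates of X, X', Y, Y' are jointly independent
    (hindep : ∀ d, iIndepFun
      (fun p : Fin d × Fin 4 => ![X d p.1, X' d p.1, Y d p.1, Y' d p.1] p.2) μ)
    -- X' is a copy of X and Y' is a copy of Y
    (hid : ∀ d (j : Fin d),
      IdentDistrib (X d j) (X' d j) μ μ ∧ IdentDistrib (Y d j) (Y' d j) μ μ)
    (hint : ∀ d (j : Fin d), MeasureTheory.MemLp (X d j) 4 μ ∧ MeasureTheory.MemLp (Y d j) 4 μ)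
    -- uniformly bounded fourth centered moments
    (hmom : ∃ C : ℝ, ∀ d (j : Fin d),
      (∫ ω, |X d j ω - ∫ ω', X d j ω' ∂μ| ^ 4 ∂μ) ≤ C ∧
      (∫ ω, |Y d j ω - ∫ ω', Y d j ω' ∂μ| ^ 4 ∂μ) ≤ C)
    (σ1 σ2 υ : ℝ) (hσ1 : 0 ≤ σ1) (hσ2 : 0 ≤ σ2)
    -- E‖X − EX‖²/d → σ1², E‖Y − EY‖²/d → σ2², ‖EX − EY‖²/d → υ²
    (hv1 : Tendsto (fun d : ℕ => (∑ j, variance (X d j) μ) / d) atTop (nhds (σ1 ^ 2)))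
    (hv2 : Tendsto (fun d : ℕ => (∑ j, variance (Y d j) μ) / d) atTop (nhds (σ2 ^ 2)))
    (hv3 : Tendsto (fun d : ℕ =>
      (∑ j, ((∫ ω, X d j ω ∂μ) - ∫ ω, Y d j ω ∂μ) ^ 2) / d) atTop (nhds (υ ^ 2))) :
    TendstoInMeasure μ
        (fun d ω => Real.sqrt (∑ j, (X d j ω - X' d j ω) ^ 2) / Real.sqrt d) atTop
        (fun _ => Real.sqrt 2 * σ1)
    ∧ TendstoInMeasure μ
        (fun d ω => Real.sqrt (∑ j, (Y d j ω - Y' d j ω) ^ 2) / Real.sqrt d) atTop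
        (fun _ => Real.sqrt 2 * σ2)
    ∧ TendstoInMeasure μ
        (fun d ω => Real.sqrt (∑ j, (X d j ω - Y d j ω) ^ 2) / Real.sqrt d) atTop
        (fun _ => Real.sqrt (σ1 ^ 2 + σ2 ^ 2 + υ ^ 2)) := by
  obtain ⟨C, hC⟩ := hmom
  have hCX : ∀ d j, centralMoment (X d j) 4 μ ≤ C := fun d j =>
    (centralMoment_four_eq_integral_abs _ _).trans_le (hC d j).1
  have hCY : ∀ d j, centralMoment (Y d j) 4 μ ≤ C := fun d j =>
    (centralMoment_four_eq_integral_abs _ _).trans_le (hC d j).2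
  have hF : ∀ d (p : Fin d × Fin 4),
      AEMeasurable (![X d p.1, X' d p.1, Y d p.1, Y' d p.1] p.2) μ := by
    rintro d ⟨j, i⟩
    fin_cases i
    exacts [(hint d j).1.aemeasurable, (hid d j).1.aemeasurable_snd, (hint d j).2.aemeasurable,
      (hid d j).2.aemeasurable_snd]
  have hpair : ∀ d (j : Fin d) {a b : Fin 4}, a ≠ b →
      IndepFun (![X d j, X' d j, Y d j, Y' d j] a) (![X d j, X' d j, Y d j, Y' d j] b) μ :=
    fun d j a b hab => (hindep d).indepFun (i := (j, a)) (j := (j, b)) (by simp [hab])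
  refine ⟨?_, ?_, ?_⟩
  · exact tendstoInMeasure_sqrt_sum_sub_sq_div_sqrt_of_identDistrib hσ1 (fun d j => (hint d j).1)
      (fun d j => (hid d j).1) (fun d j => hpair d j (a := 0) (b := 1) (by decide))
      (fun d j k => (hindep d).indepFun_sub_sq (hF d) 0 1) hCX hv1
  · exact tendstoInMeasure_sqrt_sum_sub_sq_div_sqrt_of_identDistrib hσ2 (fun d j => (hint d j).2)
      (fun d j => (hid d j).2) (fun d j => hpair d j (a := 2) (b := 3) (by decide))
      (fun d j k => (hindep d).indepFun_sub_sq (hF d) 2 3) hCY hv2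
  · exact tendstoInMeasure_sqrt_sum_sub_sq_div_sqrt (fun d j => (hint d j).1)
      (fun d j => (hint d j).2) (fun d j => hpair d j (a := 0) (b := 2) (by decide))
      (fun d j k => (hindep d).indepFun_sub_sq (hF d) 0 2) hCX hCY hv1 hv2 hv3

theorem stmt_12 {Ω : Type*} [MeasurableSpace Ω] (μ : MeasureTheory.Measure Ω)
    [IsProbabilityMeasure μ]
    (X X' Y Y' : (d : ℕ) → Fin d → Ω → ℝ)
    (hmeas : ∀ d (j : Fin d), Measurable (X d j) ∧ Measurable (X' d j)
      ∧ Measurable (Y d j) ∧ Measurable (Y' d j))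
    -- all coordinates of X, X', Y, Y' are jointly independent
    (hindep : ∀ d, iIndepFun
      (fun p : Fin d × Fin 4 => ![X d p.1, X' d p.1, Y d p.1, Y' d p.1] p.2) μ)
    -- X' is a copy of X and Y' is a copy of Y
    (hid : ∀ d (j : Fin d),
      IdentDistrib (X d j) (X' d j) μ μ ∧ IdentDistrib (Y d j) (Y' d j) μ μ)
    (hint : ∀ d (j : Fin d), MeasureTheory.MemLp (X d j) 4 μ ∧ MeasureTheory.MemLp (Y d j) 4 μ)
    -- uniformly bounded fourth centered moments
    (hmom : ∃ C : ℝ, ∀ d (j : Fin d),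
      (∫ ω, |X d j ω - ∫ ω', X d j ω' ∂μ| ^ 4 ∂μ) ≤ C ∧
      (∫ ω, |Y d j ω - ∫ ω', Y d j ω' ∂μ| ^ 4 ∂μ) ≤ C)
    (σ1 σ2 υ : ℝ) (hσ1 : 0 ≤ σ1) (hσ2 : 0 ≤ σ2)
    -- E‖X − EX‖²/d → σ1², E‖Y − EY‖²/d → σ2², ‖EX − EY‖²/d → υ²
    (hv1 : Tendsto (fun d : ℕ => (∑ j, variance (X d j) μ) / d) atTop (nhds (σ1 ^ 2)))
    (hv2 : Tendsto (fun d : ℕ => (∑ j, variance (Y d j) μ) / d) atTop (nhds (σ2 ^ 2)))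
    (hv3 : Tendsto (fun d : ℕ =>
      (∑ j, ((∫ ω, X d j ω ∂μ) - ∫ ω, Y d j ω ∂μ) ^ 2) / d) atTop (nhds (υ ^ 2))) :
    TendstoInMeasure μ
        (fun d ω => Real.sqrt (∑ j, (X d j ω - X' d j ω) ^ 2) / Real.sqrt d) atTop
        (fun _ => Real.sqrt 2 * σ1)
    ∧ TendstoInMeasure μ
        (fun d ω => Real.sqrt (∑ j, (Y d j ω - Y' d j ω) ^ 2) / Real.sqrt d) atTop
        (fun _ => Real.sqrt 2 * σ2)
    ∧ TendstoInMeasure μ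
        (fun d ω => Real.sqrt (∑ j, (X d j ω - Y d j ω) ^ 2) / Real.sqrt d) atTop
        (fun _ => Real.sqrt (σ1 ^ 2 + σ2 ^ 2 + υ ^ 2)) :=
  stmt_12_general μ X X' Y Y' hindep hid hint hmom σ1 σ2 υ hσ1 hσ2 hv1 hv2 hv3
end

section
/- Suppose W^{(1)},…,W^{(S)} are symmetric zero-diagonal N×N matrices such that both Σ_w (with entries proportional to the Frobenius inner products ⟨Ŵ^{(s)}, Ŵ^{(s')}⟩_F) and Σ_diff (with entries proportional to Σ_i W̃_{i·}^{(s)}W̃_{i·}^{(s')}) are positive definite. Then the 2S×2S covariance matrix Σ_S of the vector (U_x^{(1)} − μ_x^{(1)}, U_y^{(1)} − μ_y^{(1)}, …, U_x^{(S)} − μ_x^{(S)}, U_y^{(S)} − μ_y^{(S)}) under the permutation null is positive definite, and the quadratic form T_S = v_Sᵀ Σ_S^{-1} v_S decomposes as T_S = v_wᵀ Σ_w^{-1} v_w + v_diffᵀ Σ_diff^{-1} v_diff, where v_w and v_diff are the centered vectors of U_w^{(s)} and U_diff^{(s)} respectively. -/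
open Finset Matrix

/-- The weighted combination `U_w` of the within-group sums. -/
noncomputable def UwS {N : ℕ} (W : Matrix (Fin N) (Fin N) ℝ) (m n : ℕ)
    (π : Equiv.Perm (Fin N)) : ℝ :=
  (((n : ℝ) - 1) * Ux W m π + ((m : ℝ) - 1) * Uy W m π) / ((N : ℝ) - 2)

/-- The 2S-dimensional vector of statistics, indexed by `Fin S × Bool`:
`(s, false)` is `U_x^{(s)}` and `(s, true)` is `U_y^{(s)}`. -/
noncomputable def VS {N S : ℕ} (W : Fin S → Matrix (Fin N) (Fin N) ℝ) (m : ℕ)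
    (p : Fin S × Bool) (π : Equiv.Perm (Fin N)) : ℝ :=
  if p.2 then Uy (W p.1) m π else Ux (W p.1) m π

/-!
A uniform permutation carries a fixed injection `Fin k ↪ Fin N` to a uniform injection, so for
distinct indices the group indicators `χᵢ = [π i < m]` satisfy
`E[χ_{i₁} ⋯ χ_{i_k}] = m^(k) / N^(k)` (falling factorials). With the moments up to order three,
`U_w` is uncorrelated with every `χₖ`, hence with `U_x − U_y = 2 ∑ᵢ rᵢ χᵢ − ∑ W`, which is linear
in the `χᵢ` (`rᵢ` the row sums of `W`). So the change of variables `(U_x, U_y) ↦ (U_w, U_x − U_y)`,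
which is `1 ⊗ C` for a `2 × 2` matrix `C` of determinant `−1`, takes `Σ_S` to
`diag(Σ_w, Σ_diff)`; positive definiteness and the Mahalanobis form `vᵀ Σ⁻¹ v` are invariant
under an invertible change of variables.
-/

open scoped BigOperators Kronecker

theorem MulAction.expect_smul_eq_expect {G X M : Type*} [Group G] [Fintype G] [MulAction G X]
    [Fintype X] [MulAction.IsPretransitive G X] [AddCommMonoid M] [Module ℚ≥0 M]
    (g : X → M) (x : X) : 𝔼 σ : G, g (σ • x) = 𝔼 y, g y := by
  have : Nonempty X := ⟨x⟩
  have hconst : ∀ y, 𝔼 σ : G, g (σ • y) = 𝔼 σ : G, g (σ • x) := by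
    intro y
    obtain ⟨τ, rfl⟩ := MulAction.exists_smul_eq G x y
    exact Fintype.expect_equiv (Equiv.mulRight τ) _ _ fun σ => by simp [mul_smul]
  calc 𝔼 σ : G, g (σ • x) = 𝔼 y : X, 𝔼 σ : G, g (σ • y) := by
        simp only [hconst, Fintype.expect_const]
    _ = 𝔼 σ : G, 𝔼 y, g (σ • y) := Finset.expect_comm _ _ _
    _ = 𝔼 y, g y := by
      simp only [fun σ : G => Fintype.expect_equiv (MulAction.toPerm σ) (fun y => g (σ • y)) g
        fun _ => rfl, Fintype.expect_const]

theorem Finset.card_filter_embedding_forall_mem {α β : Type*} [Fintype α] [Fintype β]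
    [DecidableEq β] (A : Finset β) :
    #{f : α ↪ β | ∀ a, f a ∈ A} = (#A).descFactorial (Fintype.card α) := by
  rw [← Fintype.card_subtype]
  simp_rw [← Finset.mem_coe]
  rw [Fintype.card_congr (Equiv.codRestrict α (A : Set β)), Fintype.card_embedding_eq]
  simp

namespace Matrix

variable {n m o R : Type*} [Fintype n] [DecidableEq n] [Fintype m] [Fintype o] [DecidableEq o]

lemma posDef_of_posDef_mul_mul_transpose [CommRing R] [PartialOrder R] [StarRing R]
    [TrivialStar R] {A M : Matrix n n R} (hA : IsUnit A) (h : (A * M * Aᵀ).PosDef) :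
    M.PosDef := by
  rwa [← conjTranspose_eq_transpose_of_trivial, ← star_eq_conjTranspose,
    IsUnit.posDef_star_right_conjugate_iff hA] at h

lemma dotProduct_inv_mul_mul_transpose_mulVec [CommRing R] {A : Matrix n n R} (hA : IsUnit A)
    (M : Matrix n n R) (x : n → R) :
    (A *ᵥ x) ⬝ᵥ ((A * M * Aᵀ)⁻¹ *ᵥ (A *ᵥ x)) = x ⬝ᵥ (M⁻¹ *ᵥ x) := by
  have hdet := (isUnit_iff_isUnit_det A).mp hA
  have h1 : (A * M * Aᵀ)⁻¹ *ᵥ (A *ᵥ x) = Aᵀ⁻¹ *ᵥ (M⁻¹ *ᵥ x) := by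
    rw [Matrix.mul_inv_rev, Matrix.mul_inv_rev, mulVec_mulVec, Matrix.mul_assoc, Matrix.mul_assoc,
      nonsing_inv_mul _ hdet, Matrix.mul_one, mulVec_mulVec]
  have h2 : (A *ᵥ x) ᵥ* Aᵀ⁻¹ = x := by
    rw [← transpose_nonsing_inv, vecMul_transpose, mulVec_mulVec, nonsing_inv_mul _ hdet,
      one_mulVec]
  rw [h1, dotProduct_mulVec, h2]

lemma dotProduct_blockDiagonal_mulVec [CommSemiring R] (E : o → Matrix m m R)
    (x y : m × o → R) :
    x ⬝ᵥ (blockDiagonal E *ᵥ y) = ∑ b, (fun i => x (i, b)) ⬝ᵥ (E b *ᵥ fun i => y (i, b)) := by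
  simp only [dotProduct, mulVec, Fintype.sum_prod_type, blockDiagonal_apply, ite_mul, zero_mul]
  rw [Finset.sum_comm]
  refine Finset.sum_congr rfl fun b _ => Finset.sum_congr rfl fun i _ => ?_
  congr 1
  rw [Finset.sum_comm]
  simp

lemma inv_blockDiagonal [CommRing R] {E : o → Matrix n n R} (h : ∀ b, IsUnit (E b).det) :
    (blockDiagonal E)⁻¹ = blockDiagonal fun b => (E b)⁻¹ := by
  refine inv_eq_right_inv ?_
  rw [← blockDiagonal_mul]
  simp only [mul_nonsing_inv _ (h _)]
  exact blockDiagonal_one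

lemma PosDef.blockDiagonal [CommRing R] [PartialOrder R] [StarRing R]
    [IsOrderedCancelAddMonoid R] {E : o → Matrix m m R} (h : ∀ b, (E b).PosDef) :
    (blockDiagonal E).PosDef := by
  refine PosDef.of_dotProduct_mulVec_pos ?_ fun x hx => ?_
  · rw [IsHermitian, blockDiagonal_conjTranspose]
    exact congrArg Matrix.blockDiagonal (funext fun b => (h b).1)
  · obtain ⟨⟨i, b⟩, hib⟩ := Function.ne_iff.mp hx
    rw [dotProduct_blockDiagonal_mulVec]
    exact Finset.sum_pos' (fun b _ => (h b).posSemidef.dotProduct_mulVec_nonneg _)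
      ⟨b, Finset.mem_univ _, (h b).dotProduct_mulVec_pos (Function.ne_iff.mpr ⟨i, hib⟩)⟩

end Matrix

section PermutationNull

variable {N : ℕ}

lemma pE_eq_expect (f : Equiv.Perm (Fin N) → ℝ) : pE f = 𝔼 π, f π := by
  rw [pE, Fintype.expect_eq_sum_div_card]

lemma pE_add (f g : Equiv.Perm (Fin N) → ℝ) : pE (f + g) = pE f + pE g := by
  simp only [pE_eq_expect, Pi.add_apply, Finset.expect_add_distrib]

lemma pE_smul (c : ℝ) (f : Equiv.Perm (Fin N) → ℝ) : pE (c • f) = c * pE f := by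
  simp only [pE_eq_expect, Pi.smul_apply, smul_eq_mul, Finset.mul_expect]

lemma pE_sum_s16 {ι : Type*} (s : Finset ι) (f : ι → Equiv.Perm (Fin N) → ℝ) :
    pE (∑ i ∈ s, f i) = ∑ i ∈ s, pE (f i) := by
  simp only [pE_eq_expect, Finset.sum_apply, Finset.expect_sum_comm]

lemma pE_const (c : ℝ) : pE (fun _ : Equiv.Perm (Fin N) => c) = c := by
  simp [pE_eq_expect]

lemma pCov_eq (f g : Equiv.Perm (Fin N) → ℝ) : pCov f g = pE (f * g) - pE f * pE g := by
  have h : (fun π => (f π - pE f) * (g π - pE g))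
      = f * g + (-pE g) • f + (-pE f) • g + fun _ => pE f * pE g := by
    ext π; simp only [Pi.add_apply, Pi.mul_apply, Pi.smul_apply, smul_eq_mul]; ring
  rw [pCov, h, pE_add, pE_add, pE_add, pE_smul, pE_smul, pE_const]
  ring

lemma pCov_comm (f g : Equiv.Perm (Fin N) → ℝ) : pCov f g = pCov g f := by
  rw [pCov_eq, pCov_eq, mul_comm f, mul_comm (pE f)]

lemma pCov_add_left (f g h : Equiv.Perm (Fin N) → ℝ) :
    pCov (f + g) h = pCov f h + pCov g h := by
  simp only [pCov_eq, add_mul, pE_add]; ring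

lemma pCov_smul_left (c : ℝ) (f g : Equiv.Perm (Fin N) → ℝ) :
    pCov (c • f) g = c * pCov f g := by
  simp only [pCov_eq, smul_mul_assoc, pE_smul]; ring

lemma pCov_sub_left (f g h : Equiv.Perm (Fin N) → ℝ) :
    pCov (f - g) h = pCov f h - pCov g h := by
  rw [sub_eq_add_neg, ← neg_one_smul ℝ g, pCov_add_left, pCov_smul_left]; ring

lemma pCov_sum_left {ι : Type*} (s : Finset ι) (f : ι → Equiv.Perm (Fin N) → ℝ)
    (g : Equiv.Perm (Fin N) → ℝ) : pCov (∑ i ∈ s, f i) g = ∑ i ∈ s, pCov (f i) g := by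
  simp only [pCov_eq, Finset.sum_mul, pE_sum_s16, Finset.sum_sub_distrib]

lemma pCov_const_left (c : ℝ) (g : Equiv.Perm (Fin N) → ℝ) : pCov (fun _ => c) g = 0 := by
  rw [pCov_eq, show (fun _ => c) * g = c • g from rfl, pE_smul, pE_const, sub_self]

lemma pCov_smul_right (c : ℝ) (f g : Equiv.Perm (Fin N) → ℝ) :
    pCov f (c • g) = c * pCov f g := by
  rw [pCov_comm, pCov_smul_left, pCov_comm]

lemma pCov_sub_right (f g h : Equiv.Perm (Fin N) → ℝ) :
    pCov f (g - h) = pCov f g - pCov f h := by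
  rw [pCov_comm, pCov_sub_left, pCov_comm, pCov_comm h]

lemma pCov_sum_right {ι : Type*} (s : Finset ι) (f : Equiv.Perm (Fin N) → ℝ)
    (g : ι → Equiv.Perm (Fin N) → ℝ) : pCov f (∑ i ∈ s, g i) = ∑ i ∈ s, pCov f (g i) := by
  rw [pCov_comm, pCov_sum_left]
  simp only [pCov_comm (g _)]

lemma pCov_const_right (c : ℝ) (f : Equiv.Perm (Fin N) → ℝ) : pCov f (fun _ => c) = 0 := by
  rw [pCov_comm, pCov_const_left]

end PermutationNull

section CovarianceMatrix

variable {N : ℕ} {ι κ : Type*} [Fintype ι]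

noncomputable def covMatrix (X : ι → Equiv.Perm (Fin N) → ℝ) : Matrix ι ι ℝ :=
  Matrix.of fun p q => pCov (X p) (X q)

noncomputable def centered (X : ι → Equiv.Perm (Fin N) → ℝ) (π : Equiv.Perm (Fin N)) : ι → ℝ :=
  fun p => X p π - pE (X p)

lemma covMatrix_linear (A : Matrix κ ι ℝ) (X : ι → Equiv.Perm (Fin N) → ℝ) :
    covMatrix (fun k => ∑ i, A k i • X i) = A * covMatrix X * Aᵀ := by
  ext k l
  simp only [covMatrix, of_apply, pCov_sum_left, pCov_sum_right, pCov_smul_left, pCov_smul_right,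
    mul_apply, transpose_apply, Finset.sum_mul, Finset.mul_sum]
  exact Finset.sum_congr rfl fun i _ => Finset.sum_congr rfl fun j _ => by ring

lemma centered_linear (A : Matrix κ ι ℝ) (X : ι → Equiv.Perm (Fin N) → ℝ)
    (π : Equiv.Perm (Fin N)) : centered (fun k => ∑ i, A k i • X i) π = A *ᵥ centered X π := by
  ext k
  simp only [centered, mulVec, dotProduct, pE_sum_s16, pE_smul, Finset.sum_apply, Pi.smul_apply,
    smul_eq_mul, mul_sub, Finset.sum_sub_distrib]

lemma covMatrix_eq_blockDiagonal {σ o : Type*} [Fintype σ] [Fintype o] [DecidableEq o]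
    (Y : σ × o → Equiv.Perm (Fin N) → ℝ)
    (h : ∀ i j b b', b ≠ b' → pCov (Y (i, b)) (Y (j, b')) = 0) :
    covMatrix Y = blockDiagonal fun b => covMatrix fun i => Y (i, b) := by
  ext ⟨i, b⟩ ⟨j, b'⟩
  rw [blockDiagonal_apply]
  split_ifs with hb
  · subst hb; rfl
  · exact h i j b b' hb

variable [DecidableEq ι]

lemma posDef_covMatrix_of_linear {A : Matrix ι ι ℝ} (hA : IsUnit A)
    {X : ι → Equiv.Perm (Fin N) → ℝ} (h : (covMatrix fun k => ∑ i, A k i • X i).PosDef) :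
    (covMatrix X).PosDef :=
  posDef_of_posDef_mul_mul_transpose hA (covMatrix_linear A X ▸ h)

lemma centered_dotProduct_inv_covMatrix_linear {A : Matrix ι ι ℝ} (hA : IsUnit A)
    (X : ι → Equiv.Perm (Fin N) → ℝ) (π : Equiv.Perm (Fin N)) :
    centered X π ⬝ᵥ ((covMatrix X)⁻¹ *ᵥ centered X π)
      = centered (fun k => ∑ i, A k i • X i) π
          ⬝ᵥ ((covMatrix fun k => ∑ i, A k i • X i)⁻¹
            *ᵥ centered (fun k => ∑ i, A k i • X i) π) := by
  rw [covMatrix_linear, centered_linear, dotProduct_inv_mul_mul_transpose_mulVec hA]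

end CovarianceMatrix

section GroupIndicators

noncomputable def inFirst (m : ℕ) {N : ℕ} (i : Fin N) (π : Equiv.Perm (Fin N)) : ℝ :=
  if (π i : ℕ) < m then 1 else 0

noncomputable def firstProb (m N k : ℕ) : ℝ := (m.descFactorial k : ℝ) / N.descFactorial k

lemma firstProb_one (m N : ℕ) : firstProb m N 1 = m / N := by
  simp [firstProb]

lemma firstProb_two (m N : ℕ) : firstProb m N 2 = m * (m - 1) / (N * (N - 1)) := by
  simp only [firstProb, Nat.cast_descFactorial_two]

lemma firstProb_three (m N : ℕ) :
    firstProb m N 3 = m * (m - 1) * (m - 2) / (N * (N - 1) * (N - 2)) := by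
  have h (a : ℕ) : (a.descFactorial 3 : ℝ) = a * (a - 1) * (a - 2) := by
    rcases a with _ | _ | _ | a <;> simp [Nat.descFactorial_succ]; ring
  simp only [firstProb, h]

variable {N m : ℕ}

lemma pE_prod_inFirst {k : ℕ} (hmN : m ≤ N) {e : Fin k → Fin N} (he : e.Injective) :
    pE (∏ a, inFirst m (e a)) = firstProb m N k := by
  have := Equiv.Perm.isMultiplyPretransitive (Fin N) k
  have h := MulAction.expect_smul_eq_expect (G := Equiv.Perm (Fin N))
    (fun f : Fin k ↪ Fin N => ∏ a, if (f a : ℕ) < m then (1 : ℝ) else 0) ⟨e, he⟩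
  simp only [Function.Embedding.smul_apply, Equiv.Perm.smul_def] at h
  simp only [pE_eq_expect, Finset.prod_apply, inFirst]
  refine h.trans ?_
  have hcount := Finset.card_filter_embedding_forall_mem (α := Fin k) {j : Fin N | (j : ℕ) < m}
  simp only [Finset.mem_filter, Finset.mem_univ, true_and, Fin.card_filter_val_lt,
    Fintype.card_fin, min_eq_right hmN] at hcount
  rw [Fintype.expect_eq_sum_div_card, Fintype.card_embedding_eq]
  simp only [Finset.prod_boole, Finset.mem_univ, true_imp_iff, Finset.sum_boole, hcount]
  simp [firstProb]

lemma pE_inFirst (hmN : m ≤ N) (i : Fin N) : pE (inFirst m i) = firstProb m N 1 := by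
  simpa using pE_prod_inFirst (k := 1) hmN (e := ![i]) (Function.injective_of_subsingleton _)

lemma pE_inFirst_mul {i j : Fin N} (hmN : m ≤ N) (hij : i ≠ j) :
    pE (inFirst m i * inFirst m j) = firstProb m N 2 := by
  simpa using pE_prod_inFirst hmN (e := ![i, j])
    (by simp [Function.Injective, Fin.forall_fin_two, hij, hij.symm])

lemma pE_inFirst_mul_mul {i j k : Fin N} (hmN : m ≤ N) (hij : i ≠ j) (hik : i ≠ k)
    (hjk : j ≠ k) :
    pE (inFirst m i * inFirst m j * inFirst m k) = firstProb m N 3 := by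
  simpa [Fin.prod_univ_succ, mul_assoc] using pE_prod_inFirst hmN (e := ![i, j, k]) (by
    simp [Function.Injective, Fin.forall_fin_succ, hij, hik, hjk, hij.symm, hik.symm, hjk.symm])

lemma inFirst_mul_self (i : Fin N) : inFirst m i * inFirst m i = inFirst m i := by
  ext π; simp only [inFirst, Pi.mul_apply]; split_ifs <;> norm_num

lemma pCov_inFirst (hmN : m ≤ N) (i k : Fin N) :
    pCov (inFirst m i) (inFirst m k)
      = firstProb m N 2 - firstProb m N 1 ^ 2
        + if i = k then firstProb m N 1 - firstProb m N 2 else 0 := by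
  rw [pCov_eq, pE_inFirst hmN, pE_inFirst hmN]
  by_cases hik : i = k
  · subst hik; rw [inFirst_mul_self, pE_inFirst hmN, if_pos rfl]; ring
  · rw [pE_inFirst_mul hmN hik, if_neg hik]; ring

lemma pCov_inFirst_mul_inFirst (hmN : m ≤ N) {i j : Fin N} (hij : i ≠ j) (k : Fin N) :
    pCov (inFirst m i * inFirst m j) (inFirst m k)
      = firstProb m N 3 - firstProb m N 2 * firstProb m N 1
        + ((if i = k then firstProb m N 2 - firstProb m N 3 else 0)
          + if j = k then firstProb m N 2 - firstProb m N 3 else 0) := by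
  rw [pCov_eq, pE_inFirst_mul hmN hij, pE_inFirst hmN]
  by_cases hik : i = k
  · subst hik
    rw [mul_right_comm, inFirst_mul_self, pE_inFirst_mul hmN hij, if_pos rfl, if_neg hij.symm]
    ring
  by_cases hjk : j = k
  · subst hjk
    rw [mul_assoc, inFirst_mul_self, pE_inFirst_mul hmN hij, if_neg hik, if_pos rfl]
    ring
  rw [pE_inFirst_mul_mul hmN hij hik hjk, if_neg hik, if_neg hjk]
  ring

end GroupIndicators

section Statistics

variable {N m : ℕ} {W : Matrix (Fin N) (Fin N) ℝ}

noncomputable def rowStat (W : Matrix (Fin N) (Fin N) ℝ) (m : ℕ) : Equiv.Perm (Fin N) → ℝ :=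
  ∑ i, (∑ j, W i j) • inFirst m i

lemma Ux_eq_sum (W : Matrix (Fin N) (Fin N) ℝ) (m : ℕ) :
    Ux W m = ∑ i, ∑ j, W i j • (inFirst m i * inFirst m j) := by
  ext π
  simp only [Ux, inFirst, Finset.sum_apply, Pi.smul_apply, Pi.mul_apply, smul_eq_mul]
  refine Finset.sum_congr rfl fun i _ => Finset.sum_congr rfl fun j _ => ?_
  split_ifs <;> simp_all

lemma Ux_sub_Uy_eq_rowStat (hsym : W.IsSymm) :
    (fun π => Ux W m π - Uy W m π) = (2 : ℝ) • rowStat W m - fun _ => ∑ i, ∑ j, W i j := by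
  ext π
  have hterm : ∀ i j, ((if (π i : ℕ) < m ∧ (π j : ℕ) < m then W i j else 0)
      - if m ≤ (π i : ℕ) ∧ m ≤ (π j : ℕ) then W i j else 0)
      = W i j * inFirst m i π + W j i * inFirst m j π - W i j := by
    intro i j
    rw [hsym.apply i j]
    simp only [inFirst]
    split_ifs <;> first | (exfalso; omega) | ring
  rw [Ux, Uy, ← Finset.sum_sub_distrib]
  simp only [← Finset.sum_sub_distrib, hterm]
  simp only [Finset.sum_sub_distrib, Finset.sum_add_distrib]
  rw [Finset.sum_comm (f := fun i j => W j i * inFirst m j π)]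
  simp only [rowStat, Pi.sub_apply, Pi.smul_apply, Finset.sum_apply, smul_eq_mul,
    ← Finset.sum_mul]
  ring

lemma pCov_Ux_inFirst (hmN : m ≤ N) (hsym : W.IsSymm) (hdiag : ∀ i, W i i = 0) (k : Fin N) :
    pCov (Ux W m) (inFirst m k)
      = (firstProb m N 3 - firstProb m N 2 * firstProb m N 1) * ∑ i, ∑ j, W i j
        + 2 * (firstProb m N 2 - firstProb m N 3) * ∑ j, W k j := by
  have hterm : ∀ i j, W i j * pCov (inFirst m i * inFirst m j) (inFirst m k)
      = W i j * (firstProb m N 3 - firstProb m N 2 * firstProb m N 1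
        + ((if i = k then firstProb m N 2 - firstProb m N 3 else 0)
          + if j = k then firstProb m N 2 - firstProb m N 3 else 0)) := by
    intro i j
    by_cases hij : i = j
    · subst hij; simp [hdiag]
    · rw [pCov_inFirst_mul_inFirst hmN hij]
  simp only [Ux_eq_sum, pCov_sum_left, pCov_smul_left, hterm]
  simp only [mul_add, mul_ite, mul_zero, Finset.sum_add_distrib, ← Finset.sum_mul,
    Finset.sum_ite_irrel, Finset.sum_const_zero, Finset.sum_ite_eq', Finset.mem_univ, if_true]
  simp only [hsym.apply]
  ring

lemma pCov_rowStat_inFirst (hmN : m ≤ N) (k : Fin N) :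
    pCov (rowStat W m) (inFirst m k)
      = (firstProb m N 2 - firstProb m N 1 ^ 2) * ∑ i, ∑ j, W i j
        + (firstProb m N 1 - firstProb m N 2) * ∑ j, W k j := by
  simp only [rowStat, pCov_sum_left, pCov_smul_left, pCov_inFirst hmN, mul_add, mul_ite,
    mul_zero, Finset.sum_add_distrib, Finset.sum_ite_eq', Finset.mem_univ, if_true,
    ← Finset.sum_mul]
  ring

lemma UwS_eq_Ux_sub {n : ℕ} (hN : N = m + n) (hN2 : (N : ℝ) - 2 ≠ 0)
    (W : Matrix (Fin N) (Fin N) ℝ) :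
    UwS W m n = Ux W m - (((m : ℝ) - 1) / (N - 2)) • fun π => Ux W m π - Uy W m π := by
  have hNr : (N : ℝ) = m + n := by exact_mod_cast hN
  ext π
  simp only [UwS, Pi.sub_apply, Pi.smul_apply, smul_eq_mul]
  field_simp
  rw [hNr]
  ring

lemma pCov_UwS_inFirst {n : ℕ} (hN : N = m + n) (hm : 2 ≤ m) (hn : 2 ≤ n) (hsym : W.IsSymm)
    (hdiag : ∀ i, W i i = 0) (k : Fin N) : pCov (UwS W m n) (inFirst m k) = 0 := by
  have hmN : m ≤ N := by omega
  have hNr : (N : ℝ) = m + n := by exact_mod_cast hN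
  have hm' : (2 : ℝ) ≤ m := by exact_mod_cast hm
  have hn' : (2 : ℝ) ≤ n := by exact_mod_cast hn
  have h0 : (N : ℝ) ≠ 0 := by rw [hNr]; linarith
  have h1 : (N : ℝ) - 1 ≠ 0 := by rw [hNr]; linarith
  have h2 : (N : ℝ) - 2 ≠ 0 := by rw [hNr]; linarith
  rw [UwS_eq_Ux_sub hN h2, pCov_sub_left, pCov_smul_left, Ux_sub_Uy_eq_rowStat hsym, pCov_sub_left,
    pCov_smul_left, pCov_const_left, pCov_Ux_inFirst hmN hsym hdiag, pCov_rowStat_inFirst hmN,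
    firstProb_one, firstProb_two, firstProb_three]
  field_simp
  rw [hNr]
  ring

lemma pCov_UwS_Ux_sub_Uy {n : ℕ} (hN : N = m + n) (hm : 2 ≤ m) (hn : 2 ≤ n) (hsym : W.IsSymm)
    (hdiag : ∀ i, W i i = 0) {W' : Matrix (Fin N) (Fin N) ℝ} (hsym' : W'.IsSymm) :
    pCov (UwS W m n) (fun π => Ux W' m π - Uy W' m π) = 0 := by
  simp only [Ux_sub_Uy_eq_rowStat hsym', pCov_sub_right, pCov_const_right, pCov_smul_right, rowStat,
    pCov_sum_right, pCov_UwS_inFirst hN hm hn hsym hdiag, mul_zero, Finset.sum_const_zero,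
    sub_zero]

end Statistics

section ChangeOfVariables

variable {S N : ℕ}

/-- Rows: `false ↦ U_w`, `true ↦ U_x − U_y`; columns as in `VS`: `false ↦ U_x`, `true ↦ U_y`. -/
noncomputable def wDiffTransform (m n N : ℕ) : Matrix Bool Bool ℝ :=
  Matrix.of fun b b' =>
    if b then (if b' then -1 else 1)
    else if b' then ((m : ℝ) - 1) / (N - 2) else ((n : ℝ) - 1) / (N - 2)

noncomputable def wDiffStats (W : Fin S → Matrix (Fin N) (Fin N) ℝ) (m n : ℕ) :
    Fin S × Bool → Equiv.Perm (Fin N) → ℝ :=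
  fun p => if p.2 then fun π => Ux (W p.1) m π - Uy (W p.1) m π else UwS (W p.1) m n

lemma det_wDiffTransform {m n : ℕ} (hN : N = m + n) (hN2 : (N : ℝ) - 2 ≠ 0) :
    (wDiffTransform m n N).det = -1 := by
  have hNr : (N : ℝ) = m + n := by exact_mod_cast hN
  rw [← det_reindex_self finTwoEquiv.symm, det_fin_two]
  simp only [finTwoEquiv, Fin.isValue, Equiv.symm_mk, wDiffTransform, reindex_apply,
    Equiv.coe_fn_mk, submatrix_apply, Fin.reduceBEq, of_apply, Bool.false_eq_true, ↓reduceIte,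
    BEq.rfl, mul_neg, mul_one]
  field_simp
  rw [hNr]
  ring

lemma kronecker_wDiffTransform_smul_VS (W : Fin S → Matrix (Fin N) (Fin N) ℝ) (m n : ℕ) :
    (fun k => ∑ i, ((1 : Matrix (Fin S) (Fin S) ℝ) ⊗ₖ wDiffTransform m n N) k i • VS W m i)
      = wDiffStats W m n := by
  ext ⟨s, b⟩ π
  cases b <;>
  · simp only [Finset.sum_apply, Pi.smul_apply, smul_eq_mul, kroneckerMap_apply, one_apply,
      Fintype.sum_prod_type, ite_mul, one_mul, zero_mul, Fintype.sum_bool, ite_add_ite, add_zero,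
      Finset.sum_ite_eq, Finset.mem_univ, VS, wDiffStats, wDiffTransform, of_apply,
      Bool.false_eq_true, ↓reduceIte, UwS]
    ring

lemma covMatrix_wDiffStats {m n : ℕ} (hN : N = m + n) (hm : 2 ≤ m) (hn : 2 ≤ n)
    {W : Fin S → Matrix (Fin N) (Fin N) ℝ} (hsym : ∀ s, (W s).IsSymm)
    (hdiag : ∀ s i, W s i i = 0) :
    covMatrix (wDiffStats W m n) = blockDiagonal fun b =>
      if b then covMatrix fun s π => Ux (W s) m π - Uy (W s) m π
      else covMatrix fun s => UwS (W s) m n := by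
  rw [covMatrix_eq_blockDiagonal]
  · congr; ext1 b; cases b <;> rfl
  · rintro s s' (_ | _) (_ | _) hb <;> simp only [ne_eq, not_true_eq_false] at hb
    · exact pCov_UwS_Ux_sub_Uy hN hm hn (hsym s) (hdiag s) (hsym s')
    · rw [wDiffStats, pCov_comm]
      exact pCov_UwS_Ux_sub_Uy hN hm hn (hsym s') (hdiag s') (hsym s)

end ChangeOfVariables

theorem stmt_16_general (S m n N : ℕ) (hm : 2 ≤ m) (hn : 2 ≤ n) (hN : N = m + n)
    (W : Fin S → Matrix (Fin N) (Fin N) ℝ)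
    (hsym : ∀ s, (W s).IsSymm) (hdiag : ∀ s i, W s i i = 0)
    (hw : Matrix.PosDef (Matrix.of fun s s' : Fin S =>
        pCov (UwS (W s) m n) (UwS (W s') m n)))
    (hdiff : Matrix.PosDef (Matrix.of fun s s' : Fin S =>
        pCov (fun π => Ux (W s) m π - Uy (W s) m π)
          (fun π => Ux (W s') m π - Uy (W s') m π))) :
    Matrix.PosDef (Matrix.of fun p q : Fin S × Bool => pCov (VS W m p) (VS W m q))
    ∧ ∀ π : Equiv.Perm (Fin N),
        (fun p : Fin S × Bool => VS W m p π - pE (VS W m p)) ⬝ᵥ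
            ((Matrix.of fun p q : Fin S × Bool => pCov (VS W m p) (VS W m q))⁻¹ *ᵥ
              (fun p : Fin S × Bool => VS W m p π - pE (VS W m p)))
          = (fun s : Fin S => UwS (W s) m n π - pE (UwS (W s) m n)) ⬝ᵥ
              ((Matrix.of fun s s' : Fin S =>
                  pCov (UwS (W s) m n) (UwS (W s') m n))⁻¹ *ᵥ
                (fun s : Fin S => UwS (W s) m n π - pE (UwS (W s) m n)))
            + (fun s : Fin S => (Ux (W s) m π - Uy (W s) m π)
                  - pE (fun π' => Ux (W s) m π' - Uy (W s) m π')) ⬝ᵥ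
              ((Matrix.of fun s s' : Fin S =>
                  pCov (fun π' => Ux (W s) m π' - Uy (W s) m π')
                    (fun π' => Ux (W s') m π' - Uy (W s') m π'))⁻¹ *ᵥ
                (fun s : Fin S => (Ux (W s) m π - Uy (W s) m π)
                  - pE (fun π' => Ux (W s) m π' - Uy (W s) m π'))) := by
  have hN2 : (N : ℝ) - 2 ≠ 0 := by
    have : (4 : ℝ) ≤ N := by exact_mod_cast (show 4 ≤ N by omega)
    linarith
  have hA : IsUnit ((1 : Matrix (Fin S) (Fin S) ℝ) ⊗ₖ wDiffTransform m n N) := by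
    rw [isUnit_iff_isUnit_det, det_kronecker, det_wDiffTransform hN hN2]
    simp
  have hY := kronecker_wDiffTransform_smul_VS W m n
  have hblock := covMatrix_wDiffStats hN hm hn hsym hdiag
  have hblocks : ∀ b : Bool, (if b then covMatrix fun s π => Ux (W s) m π - Uy (W s) m π
      else covMatrix fun s => UwS (W s) m n).PosDef := by
    rintro (_ | _)
    exacts [hw, hdiff]
  refine ⟨posDef_covMatrix_of_linear hA (by rw [hY, hblock]; exact PosDef.blockDiagonal hblocks),
    fun π => ?_⟩
  have key := centered_dotProduct_inv_covMatrix_linear hA (VS W m) π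
  rw [hY, hblock, inv_blockDiagonal fun b => (isUnit_iff_isUnit_det _).mp (hblocks b).isUnit,
    dotProduct_blockDiagonal_mulVec, Fintype.sum_bool, add_comm] at key
  exact key

theorem stmt_16 (S m n N : ℕ) (hS : 1 ≤ S) (hm : 2 ≤ m) (hn : 2 ≤ n) (hN : N = m + n)
    (W : Fin S → Matrix (Fin N) (Fin N) ℝ)
    (hsym : ∀ s, (W s).IsSymm) (hdiag : ∀ s i, W s i i = 0)
    (hw : Matrix.PosDef (Matrix.of fun s s' : Fin S =>
        pCov (UwS (W s) m n) (UwS (W s') m n)))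
    (hdiff : Matrix.PosDef (Matrix.of fun s s' : Fin S =>
        pCov (fun π => Ux (W s) m π - Uy (W s) m π)
          (fun π => Ux (W s') m π - Uy (W s') m π))) :
    Matrix.PosDef (Matrix.of fun p q : Fin S × Bool => pCov (VS W m p) (VS W m q))
    ∧ ∀ π : Equiv.Perm (Fin N),
        (fun p : Fin S × Bool => VS W m p π - pE (VS W m p)) ⬝ᵥ
            ((Matrix.of fun p q : Fin S × Bool => pCov (VS W m p) (VS W m q))⁻¹ *ᵥ
              (fun p : Fin S × Bool => VS W m p π - pE (VS W m p)))
          = (fun s : Fin S => UwS (W s) m n π - pE (UwS (W s) m n)) ⬝ᵥ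
              ((Matrix.of fun s s' : Fin S =>
                  pCov (UwS (W s) m n) (UwS (W s') m n))⁻¹ *ᵥ
                (fun s : Fin S => UwS (W s) m n π - pE (UwS (W s) m n)))
            + (fun s : Fin S => (Ux (W s) m π - Uy (W s) m π)
                  - pE (fun π' => Ux (W s) m π' - Uy (W s) m π')) ⬝ᵥ
              ((Matrix.of fun s s' : Fin S =>
                  pCov (fun π' => Ux (W s) m π' - Uy (W s) m π')
                    (fun π' => Ux (W s') m π' - Uy (W s') m π'))⁻¹ *ᵥ
                (fun s : Fin S => (Ux (W s) m π - Uy (W s) m π)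
                  - pE (fun π' => Ux (W s) m π' - Uy (W s) m π'))) :=
  stmt_16_general S m n N hm hn hN W hsym hdiag hw hdiff
end
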